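/- arXiv:2101.04613 — 11 statements merged into one kernel-verified Lean document; each statement's English description precedes it below -/
import Mathlib

section
/- Let G be a locally compact Polish abelian group and let H be a Borel measurable subgroup of G of at most countable index. Then H is open. -/
/-!
Countably many translates of `H` cover `G`, so `H` has positive Haar measure. By Steinhaus'
theorem `H / H = H` is then a neighbourhood of `1`, and a subgroup that is a neighbourhood of `1`
is open.
-/

open MeasureTheory Pointwise

theorem Subgroup.measure_pos_of_countable_quotient {G : Type*} [Group G] [MeasurableSpace G]
    (μ : Measure G) [μ.IsMulLeftInvariant] [NeZero μ] (H : Subgroup G) [Countable (G ⧸ H)] :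
    0 < μ H := by
  refine pos_iff_ne_zero.2 fun hH => NeZero.ne μ ?_
  rw [← Measure.measure_univ_eq_zero, QuotientGroup.univ_eq_iUnion_smul H]
  exact measure_iUnion_null fun q => by rw [measure_smul, hH]

theorem Subgroup.isOpen_of_haar_pos {G : Type*} [Group G] [TopologicalSpace G]
    [IsTopologicalGroup G] [LocallyCompactSpace G] [MeasurableSpace G] [BorelSpace G]
    (μ : Measure G) [μ.IsHaarMeasure] [μ.InnerRegular] (H : Subgroup G)
    (hH : MeasurableSet (H : Set G)) (hpos : 0 < μ H) : IsOpen (H : Set G) :=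
  H.isOpen_of_mem_nhds <| by
    simpa only [coe_div_coe] using Measure.div_mem_nhds_one_of_haar_pos μ _ hH hpos

/-- Let `G` be a locally compact Polish abelian group and `H` a Borel measurable
subgroup of at most countable index. Then `H` is open. -/
theorem borel_subgroup_countable_index_isOpen
    {G : Type*} [TopologicalSpace G] [PolishSpace G] [CommGroup G]
    [IsTopologicalGroup G] [LocallyCompactSpace G]
    [MeasurableSpace G] [BorelSpace G]
    (H : Subgroup G) (hmeas : MeasurableSet (H : Set G))
    (hcount : Countable (G ⧸ H)) :
    IsOpen (H : Set G) :=
  H.isOpen_of_haar_pos Measure.haar hmeas (H.measure_pos_of_countable_quotient Measure.haar)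
end

section
/- Any Borel measurable group homomorphism from a locally compact Polish group into a Polish group is continuous. -/
/-!
Steinhaus' theorem drives the argument. Given a neighbourhood `V` of `1` in `H`, choose an open
`U ∋ 1` with `U / U ⊆ V`. Countably many right translates `U * {h}` cover the separable group `H`,
so their preimages are countably many Borel sets covering `G`, and one of them, `E`, has positive
Haar measure. By Steinhaus, `E / E` is a neighbourhood of `1`, and `φ` maps it into `U / U ⊆ V`.
-/

open MeasureTheory TopologicalSpace Set Filter Topology Pointwise

theorem iUnion_mul_singleton_denseSeq_eq_univ {H : Type*} [TopologicalSpace H] [Group H]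
    [IsTopologicalGroup H] [SeparableSpace H] [Nonempty H] {U : Set H} (hU : IsOpen U)
    (hU_ne : U.Nonempty) : ⋃ n, U * {denseSeq H n} = univ := by
  refine eq_univ_of_forall fun x => mem_iUnion.2 ?_
  obtain ⟨n, u, hu, hn⟩ : ∃ n, denseSeq H n ∈ U⁻¹ * {x} :=
    (denseRange_denseSeq H).exists_mem_open hU.inv.mul_right (hU_ne.inv.mul (singleton_nonempty x))
  obtain ⟨y, rfl, hy⟩ := hn
  exact ⟨n, u⁻¹, hu, _, rfl, by simp [← hy]⟩

theorem exists_div_mem_nhds_one_of_iUnion_eq_univ {G ι : Type*} [Countable ι]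
    [TopologicalSpace G] [Group G] [IsTopologicalGroup G] [LocallyCompactSpace G]
    [SecondCountableTopology G] [MeasurableSpace G] [BorelSpace G] {E : ι → Set G}
    (hE : ∀ i, MeasurableSet (E i)) (hE_cover : ⋃ i, E i = univ) :
    ∃ i, E i / E i ∈ 𝓝 (1 : G) := by
  obtain ⟨i, hi⟩ := exists_measure_pos_of_not_measure_iUnion_null (μ := Measure.haar) <| by
    rw [hE_cover]
    exact isOpen_univ.measure_ne_zero _ univ_nonempty
  exact ⟨i, Measure.div_mem_nhds_one_of_haar_pos _ _ (hE i) hi⟩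

theorem MonoidHom.preimage_mul_singleton_div_self_subset {G H : Type*} [Group G] [Group H]
    (φ : G →* H) (U : Set H) (h : H) :
    φ ⁻¹' (U * {h}) / φ ⁻¹' (U * {h}) ⊆ φ ⁻¹' (U / U) := by
  rintro _ ⟨x, ⟨u, hu, _, rfl, hx⟩, y, ⟨v, hv, _, rfl, hy⟩, rfl⟩
  refine ⟨u, hu, v, hv, ?_⟩
  rw [map_div, ← hx, ← hy, mul_div_mul_right_eq_div]

/-- Any Borel measurable group homomorphism from a locally compact Polish group into a
Polish group is continuous. -/
theorem measurable_hom_continuous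
    {G H : Type*} [TopologicalSpace G] [PolishSpace G] [Group G] [IsTopologicalGroup G]
    [LocallyCompactSpace G] [MeasurableSpace G] [BorelSpace G]
    [TopologicalSpace H] [PolishSpace H] [Group H] [IsTopologicalGroup H]
    [MeasurableSpace H] [BorelSpace H]
    (φ : G →* H) (hφ : Measurable φ) :
    Continuous φ := by
  refine continuous_of_continuousAt_one φ fun V hV => mem_map.2 ?_
  rw [map_one] at hV
  obtain ⟨W, hW, hWV⟩ := exists_nhds_split_inv hV
  obtain ⟨U, hUW, hU, hU1⟩ := mem_nhds_iff.1 hW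
  have : Nonempty H := ⟨1⟩
  obtain ⟨n, hn⟩ := exists_div_mem_nhds_one_of_iUnion_eq_univ
    (fun n => hφ (hU.mul_right (t := {denseSeq H n})).measurableSet)
    (by rw [← preimage_iUnion, iUnion_mul_singleton_denseSeq_eq_univ hU ⟨1, hU1⟩, preimage_univ])
  refine mem_of_superset hn ((φ.preimage_mul_singleton_div_self_subset U _).trans ?_)
  exact preimage_mono (div_subset_iff.2 fun v hv w hw => hWV v (hUW hv) w (hUW hw))
end

section
/- Let H be a compact abelian group and let φ: ℝⁿ → H be a measurable map. Suppose there exists an open ball W around 0 in ℝⁿ such that φ(v + w) = φ(v)·φ(w) for all v, w ∈ W. Then there exists a group homomorphism φ̃: ℝⁿ → H agreeing with φ on W. -/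
/-!
Since `φ` is multiplicative near `0`, `φ (k • x) = φ x ^ k` as long as `k • x` stays in the
ball, and so `φ (m⁻¹ • v) ^ m` does not depend on the integer `m` once `m⁻¹ • v` lies in the
ball: comparing `m` and `k` through the common multiple `m * k` shows this. The common value
is the extension; it is multiplicative because, for `m` large enough, `m⁻¹ • v`, `m⁻¹ • w` and
their sum all lie in the ball.
-/

open Metric

namespace LocalHom

def IsHomOnBall {E H : Type*} [SeminormedAddGroup E] [Mul H] (φ : E → H) (r : ℝ) : Prop :=
  ∀ v w : E, v ∈ ball (0 : E) r → w ∈ ball (0 : E) r → φ (v + w) = φ v * φ w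

section Group

variable {E H : Type*} [SeminormedAddGroup E] [Group H] {φ : E → H} {r : ℝ}

theorem IsHomOnBall.map_zero (hφ : IsHomOnBall φ r) (hr : 0 < r) : φ 0 = 1 := by
  have h := hφ 0 0 (mem_ball_self hr) (mem_ball_self hr)
  rw [add_zero] at h
  exact left_eq_mul.mp h

theorem IsHomOnBall.map_nsmul (hφ : IsHomOnBall φ r) {x : E} :
    ∀ {k : ℕ}, k * ‖x‖ < r → φ (k • x) = φ x ^ k
  | 0, h => by simpa using hφ.map_zero (by simpa using h)
  | k + 1, h => by
    push_cast at h
    have hx : ‖x‖ < r := by nlinarith [norm_nonneg x, (Nat.cast_nonneg k : (0 : ℝ) ≤ k)]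
    have hk : k * ‖x‖ < r := by nlinarith [norm_nonneg x]
    have hkx : k • x ∈ ball (0 : E) r := mem_ball_zero_iff.mpr (norm_nsmul_le.trans_lt hk)
    rw [succ_nsmul, hφ _ _ hkx (mem_ball_zero_iff.mpr hx), hφ.map_nsmul hk, pow_succ]

theorem cast_pos_of_norm_lt_mul {m : ℕ} {v : E} (hv : ‖v‖ < m * r) : (0 : ℝ) < m := by
  rcases Nat.eq_zero_or_pos m with rfl | hm
  · rw [Nat.cast_zero, zero_mul] at hv
    exact absurd hv (norm_nonneg v).not_gt
  · exact_mod_cast hm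

end Group

section Rescaling

variable {E H : Type*} [SeminormedAddCommGroup E] [NormedSpace ℝ E] [CommGroup H]
  {φ : E → H} {r : ℝ}

noncomputable def rescaledPow (φ : E → H) (m : ℕ) (v : E) : H := φ ((m : ℝ)⁻¹ • v) ^ m

theorem norm_inv_smul_lt {m : ℕ} {v : E} (hv : ‖v‖ < m * r) : ‖(m : ℝ)⁻¹ • v‖ < r := by
  have hm := cast_pos_of_norm_lt_mul hv
  rwa [norm_smul_of_nonneg (inv_nonneg.2 hm.le), inv_mul_lt_iff₀ hm]

theorem rescaledPow_eq_mul (hφ : IsHomOnBall φ r) {m k : ℕ} (hk : 0 < k) {v : E}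
    (hv : ‖v‖ < m * r) : rescaledPow φ m v = rescaledPow φ (m * k) v := by
  set x : E := ((m * k : ℕ) : ℝ)⁻¹ • v
  have hkx : k • x = (m : ℝ)⁻¹ • v := by
    have hm := cast_pos_of_norm_lt_mul hv
    have hk : (0 : ℝ) < k := by exact_mod_cast hk
    rw [← Nat.cast_smul_eq_nsmul ℝ, smul_smul]
    congr 1
    push_cast
    field_simp
  have hx : k * ‖x‖ < r := by
    rw [← norm_smul_of_nonneg k.cast_nonneg, Nat.cast_smul_eq_nsmul, hkx]
    exact norm_inv_smul_lt hv
  rw [rescaledPow, rescaledPow, ← hkx, hφ.map_nsmul hx, ← pow_mul, mul_comm k m]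

theorem rescaledPow_eq (hφ : IsHomOnBall φ r) {m k : ℕ} {v : E} (hm : ‖v‖ < m * r)
    (hk : ‖v‖ < k * r) : rescaledPow φ m v = rescaledPow φ k v := by
  have hm₀ : 0 < m := by exact_mod_cast cast_pos_of_norm_lt_mul hm
  have hk₀ : 0 < k := by exact_mod_cast cast_pos_of_norm_lt_mul hk
  rw [rescaledPow_eq_mul hφ hk₀ hm, mul_comm, ← rescaledPow_eq_mul hφ hm₀ hk]

theorem rescaledPow_add (hφ : IsHomOnBall φ r) {m : ℕ} {v w : E} (hv : ‖v‖ < m * r)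
    (hw : ‖w‖ < m * r) : rescaledPow φ m (v + w) = rescaledPow φ m v * rescaledPow φ m w := by
  have hv' := mem_ball_zero_iff.mpr (norm_inv_smul_lt hv)
  have hw' := mem_ball_zero_iff.mpr (norm_inv_smul_lt hw)
  rw [rescaledPow, rescaledPow, rescaledPow, smul_add, hφ _ _ hv' hw', mul_pow]

theorem rescaledPow_one (v : E) : rescaledPow φ 1 v = φ v := by
  simp [rescaledPow]

noncomputable def extension (φ : E → H) (r : ℝ) (v : E) : H :=
  rescaledPow φ (⌈‖v‖ / r⌉₊ + 1) v

theorem extension_eq_rescaledPow (hφ : IsHomOnBall φ r) (hr : 0 < r) {m : ℕ} {v : E}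
    (hv : ‖v‖ < m * r) : extension φ r v = rescaledPow φ m v := by
  refine rescaledPow_eq hφ ?_ hv
  have hceil := Nat.le_ceil (‖v‖ / r)
  rw [div_le_iff₀ hr] at hceil
  push_cast
  linarith

theorem extension_add (hφ : IsHomOnBall φ r) (hr : 0 < r) (v w : E) :
    extension φ r (v + w) = extension φ r v * extension φ r w := by
  obtain ⟨m, hm⟩ := exists_nat_gt ((‖v‖ + ‖w‖) / r)
  rw [div_lt_iff₀ hr] at hm
  have hv : ‖v‖ < m * r := by linarith [norm_nonneg w]
  have hw : ‖w‖ < m * r := by linarith [norm_nonneg v]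
  rw [extension_eq_rescaledPow hφ hr hv, extension_eq_rescaledPow hφ hr hw,
    extension_eq_rescaledPow hφ hr ((norm_add_le v w).trans_lt hm), rescaledPow_add hφ hv hw]

theorem extension_eq_of_mem_ball (hφ : IsHomOnBall φ r) (hr : 0 < r) {v : E}
    (hv : v ∈ ball (0 : E) r) : extension φ r v = φ v := by
  rw [extension_eq_rescaledPow hφ hr (m := 1) (by simpa using hv), rescaledPow_one]

end Rescaling

end LocalHom

open LocalHom in
theorem lift_local_homomorphism_general
    {n : ℕ} {H : Type*} [CommGroup H]
    (φ : (Fin n → ℝ) → H)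
    (r : ℝ) (hr : 0 < r)
    (hadd : ∀ v w : Fin n → ℝ, v ∈ Metric.ball (0 : Fin n → ℝ) r →
      w ∈ Metric.ball (0 : Fin n → ℝ) r → φ (v + w) = φ v * φ w) :
    ∃ ψ : (Fin n → ℝ) → H, (∀ v w : Fin n → ℝ, ψ (v + w) = ψ v * ψ w) ∧
      ∀ v ∈ Metric.ball (0 : Fin n → ℝ) r, ψ v = φ v :=
  ⟨extension φ r, extension_add hadd hr, fun _ hv => extension_eq_of_mem_ball hadd hr hv⟩

/-- A measurable map `φ : ℝⁿ → H` into a compact abelian group which is a homomorphism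
on an open ball `W` around `0` agrees on `W` with a genuine group homomorphism. -/
theorem lift_local_homomorphism
    {n : ℕ} {H : Type*} [CommGroup H] [TopologicalSpace H] [IsTopologicalGroup H]
    [CompactSpace H] [MeasurableSpace H] [BorelSpace H]
    (φ : (Fin n → ℝ) → H) (hmeas : Measurable φ)
    (r : ℝ) (hr : 0 < r)
    (hadd : ∀ v w : Fin n → ℝ, v ∈ Metric.ball (0 : Fin n → ℝ) r →
      w ∈ Metric.ball (0 : Fin n → ℝ) r → φ (v + w) = φ v * φ w) :
    ∃ ψ : (Fin n → ℝ) → H, (∀ v w : Fin n → ℝ, ψ (v + w) = ψ v * ψ w) ∧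
      ∀ v ∈ Metric.ball (0 : Fin n → ℝ) r, ψ v = φ v :=
  lift_local_homomorphism_general φ r hr hadd
end

section
/- Let Γ be an abelian group acting on a measure space X by measure-preserving transformations T_g, and let P: X → S¹ be measurable. Suppose P takes values in the cyclic group C_{p^n} of p^n-th roots of unity (p prime), and suppose P is a polynomial of degree < d, i.e., Δ_{h₁}⋯Δ_{h_d} P = 1 almost everywhere for all h₁,…,h_d ∈ Γ, where Δ_h P(x) = P(T_h x)·conj(P(x)). If d ≤ p, then for every g ∈ Γ of order p, the function Δ_g(P^p) = 1 almost everywhere; equivalently if the action is ergodic then P^p is constant almost everywhere. -/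
open MeasureTheory

/-- The multiplicative derivative of `φ` with respect to a transformation `S`. -/
noncomputable def mulDeriv {X U : Type*} [Group U] (S : X → X) (φ : X → U) : X → U :=
  fun x => φ (S x) * (φ x)⁻¹

/-!
Pass to functions modulo null sets (germs along `ae μ`), written additively. There
`Δ_g = σ - 1`, where `σ` is precomposition with `T g`, and `σ ^ p = 1` because `g` has order `p`.
Expanding `(1 + Δ_g) ^ p = 1` gives `∑_{j=1}^p C(p,j) Δ_g^j = 0`. Applied to `Δ_g^(k-1) P`, the
terms with `1 < j < p` are multiples of `p • Δ_g^i P` with `i > k` and the term `j = p` is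
`Δ_g^(p+k-1) P = 0` because `d ≤ p`, so a descending induction on `k ≥ 1` gives `p • Δ_g^k P = 0`.
-/

open Filter Finset

section OneAddPowEqOne

variable {R M : Type*} [Ring R] [AddCommGroup M] [Module R M] {D : R} {p : ℕ}

theorem sum_choose_succ_smul_pow_eq_zero_of_one_add_pow_eq_one (hD : (1 + D) ^ p = 1) :
    ∑ j ∈ range p, p.choose (j + 1) • D ^ (j + 1) = 0 := by
  rw [add_comm, (Commute.one_right D).add_pow, sum_range_succ'] at hD
  simpa [nsmul_eq_mul, Nat.cast_comm] using hD

theorem nsmul_pow_smul_eq_zero_of_one_add_pow_eq_one (hp : p.Prime) (hD : (1 + D) ^ p = 1)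
    {d : ℕ} (hd : d ≤ p) {a : M} (ha : D ^ d • a = 0) {k : ℕ} (hk : k ≠ 0) :
    p • D ^ k • a = 0 := by
  have hvanish (m : ℕ) (hm : d ≤ m) : D ^ m • a = 0 := by
    rw [← pow_sub_mul_pow D hm, mul_smul, ha, smul_zero]
  have hsum (r : ℕ) : ∑ j ∈ range p, p.choose (j + 1) • D ^ (j + 1 + r) • a = 0 := by
    have := congrArg (· • D ^ r • a) (sum_choose_succ_smul_pow_eq_zero_of_one_add_pow_eq_one hD)
    simp only [sum_smul, zero_smul, smul_assoc] at this
    simpa only [← mul_smul, ← pow_add] using this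
  obtain ⟨r, rfl⟩ := Nat.exists_eq_add_one_of_ne_zero hk
  clear hk
  induction r using Nat.strong_decreasing_induction with
  | base => exact ⟨d, fun m hm => by rw [hvanish (m + 1) (by omega), smul_zero]⟩
  | step r ih =>
    rw [← hsum r, sum_eq_single_of_mem 0 (mem_range.2 hp.pos), Nat.choose_one_right, zero_add,
      add_comm 1 r]
    intro j hj hj0
    rcases (Nat.succ_le_of_lt (mem_range.1 hj)).lt_or_eq with hjp | hjp
    · obtain ⟨c, hc⟩ := hp.dvd_choose_self (Nat.succ_ne_zero j) hjp
      rw [hc, mul_comm, mul_smul, add_right_comm, ih (j + r) (by omega), smul_zero]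
    · rw [hvanish _ (by omega), smul_zero]

end OneAddPowEqOne

namespace Filter.Germ

variable {X G : Type*} [AddCommGroup G] {l : Filter X}

def compTendstoEnd (S : X → X) (hS : Tendsto S l l) : AddMonoid.End (l.Germ G) where
  toFun f := f.compTendsto S hS
  map_zero' := rfl
  map_add' f g := inductionOn₂ f g fun _ _ => rfl

theorem compTendstoEnd_pow_coe {S : X → X} (hS : Tendsto S l l) (f : X → G) (m : ℕ) :
    (compTendstoEnd S hS ^ m) (f : l.Germ G) = ↑(f ∘ S^[m]) := by
  induction m with
  | zero => rfl
  | succ m ih => rw [pow_succ', AddMonoid.End.coe_mul, Function.comp_apply, ih]; rfl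

theorem compTendstoEnd_sub_one_coe_ofMul {U : Type*} [CommGroup U] {S : X → X}
    (hS : Tendsto S l l) (φ : X → U) :
    (compTendstoEnd (G := Additive U) S hS - 1) (↑(Additive.ofMul ∘ φ) : l.Germ (Additive U)) =
      ↑(Additive.ofMul ∘ mulDeriv S φ) := by
  change (↑(Additive.ofMul ∘ φ ∘ S) - ↑(Additive.ofMul ∘ φ) : l.Germ (Additive U)) = _
  rw [← coe_sub]
  congr 1
  funext x
  simp only [mulDeriv, Function.comp_apply, Pi.sub_apply, ← div_eq_mul_inv, ofMul_div]

theorem compTendstoEnd_sub_one_pow_coe_ofMul {U : Type*} [CommGroup U] {S : X → X}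
    (hS : Tendsto S l l) (φ : X → U) (k : ℕ) :
    ((compTendstoEnd (G := Additive U) S hS - 1) ^ k)
        (↑(Additive.ofMul ∘ φ) : l.Germ (Additive U)) =
      ↑(Additive.ofMul ∘ (mulDeriv S)^[k] φ) := by
  induction k with
  | zero => rfl
  | succ k ih =>
    rw [pow_succ', AddMonoid.End.coe_mul, Function.comp_apply, ih, Function.iterate_succ_apply',
      compTendstoEnd_sub_one_coe_ofMul]

end Filter.Germ

theorem List.foldr_replicate_eq_iterate {α β : Type*} (f : α → β → β) (a : α) (b : β) (n : ℕ) :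
    (List.replicate n a).foldr f b = (f a)^[n] b := by
  induction n with
  | zero => rfl
  | succ n ih => rw [List.replicate_succ, List.foldr_cons, ih, Function.iterate_succ_apply']

theorem iterate_eq_apply_nsmul {Γ X : Type*} [AddMonoid Γ] {T : Γ → X → X}
    (hT0 : T 0 = id) (hTadd : ∀ g h : Γ, T (g + h) = T g ∘ T h) (g : Γ) (m : ℕ) :
    (T g)^[m] = T (m • g) := by
  induction m with
  | zero => rw [zero_smul, hT0]; rfl
  | succ m ih => rw [Function.iterate_succ', ih, ← hTadd, succ_nsmul']

theorem pow_p_invariant_of_phasePoly_general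
    {Γ X : Type*} [AddCommGroup Γ] [MeasurableSpace X]
    (μ : Measure X) (T : Γ → X → X)
    (hmp : ∀ g : Γ, MeasurePreserving (T g) μ μ)
    (hT0 : T 0 = id) (hTadd : ∀ g h : Γ, T (g + h) = T g ∘ T h)
    (P : X → Circle)
    (p d : ℕ) (hp : p.Prime)
    (hpoly : ∀ h : Fin d → Γ,
      ∀ᵐ x ∂μ, (((List.ofFn h).map T).foldr mulDeriv P) x = 1)
    (hd : d ≤ p)
    (g : Γ) (hg : addOrderOf g = p) :
    ∀ᵐ x ∂μ, (P (T g x)) ^ p = (P x) ^ p := by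
  have hS : Tendsto (T g) (ae μ) (ae μ) := (hmp g).quasiMeasurePreserving.tendsto_ae
  set D := Germ.compTendstoEnd (G := Additive Circle) (T g) hS - 1
  have hpow : (1 + D) ^ p = 1 := by
    ext f
    induction f using Germ.inductionOn
    rw [add_sub_cancel, Germ.compTendstoEnd_pow_coe, iterate_eq_apply_nsmul hT0 hTadd, ← hg,
      addOrderOf_nsmul_eq_zero, hT0]
    rfl
  have hPd : ∀ᵐ x ∂μ, (mulDeriv (T g))^[d] P x = 1 := by
    simpa [List.ofFn_const, List.map_replicate, List.foldr_replicate_eq_iterate] using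
      hpoly fun _ => g
  have hDdP : D ^ d • (↑(Additive.ofMul ∘ P) : (ae μ).Germ (Additive Circle)) = 0 := by
    rw [AddMonoid.End.smul_def, Germ.compTendstoEnd_sub_one_pow_coe_ofMul, ← Germ.coe_zero,
      Germ.coe_eq]
    filter_upwards [hPd] with x hx
    simp [hx]
  have htorsion := nsmul_pow_smul_eq_zero_of_one_add_pow_eq_one hp hpow hd hDdP one_ne_zero
  rw [pow_one, AddMonoid.End.smul_def, Germ.compTendstoEnd_sub_one_coe_ofMul, ← Germ.coe_smul,
    ← Germ.coe_zero, Germ.coe_eq] at htorsion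
  filter_upwards [htorsion] with x hx
  rwa [Pi.smul_apply, Function.comp_apply, ← ofMul_pow, Pi.zero_apply, ofMul_eq_zero, mulDeriv,
    mul_pow, inv_pow, mul_inv_eq_one] at hx

/-- Let `Γ` be an abelian group acting on a measure space by measure-preserving
transformations, and `P : X → S¹` a measurable phase polynomial of degree `< d` taking
values in the `p^n`-th roots of unity, with `d ≤ p` (`p` prime).  Then for every `g` of
order `p` we have `Δ_g (P^p) = 1` a.e. -/
theorem pow_p_invariant_of_phasePoly
    [MeasurableSpace Circle] [BorelSpace Circle]
    {Γ X : Type*} [AddCommGroup Γ] [MeasurableSpace X]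
    (μ : Measure X) (T : Γ → X → X)
    (hmp : ∀ g : Γ, MeasurePreserving (T g) μ μ)
    (hT0 : T 0 = id) (hTadd : ∀ g h : Γ, T (g + h) = T g ∘ T h)
    (P : X → Circle) (hPmeas : Measurable P)
    (p n d : ℕ) (hp : p.Prime)
    (hval : ∀ x, (P x) ^ (p ^ n) = 1)
    (hpoly : ∀ h : Fin d → Γ,
      ∀ᵐ x ∂μ, (((List.ofFn h).map T).foldr mulDeriv P) x = 1)
    (hd : d ≤ p)
    (g : Γ) (hg : addOrderOf g = p) :
    ∀ᵐ x ∂μ, (P (T g x)) ^ p = (P x) ^ p :=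
  pow_p_invariant_of_phasePoly_general μ T hmp hT0 hTadd P p d hp hpoly hd g hg
end

section
/- Let F: X → ℤ/p^mℤ be an (additive) polynomial of degree < k with respect to a measure-preserving ℤ/pℤ-action generated by T on a probability space X, where p is a prime with p ≥ k. Then p·F is invariant under T (and hence a.e. constant if the action is ergodic). Here F is a polynomial of degree < k means (Δ⁺)^k F = 0 where Δ⁺F = F∘T − F. -/
/-!
Let `D` be the difference operator `F ↦ F ∘ T - F`. Since `D + 1` is composition with `T`,
`(D + 1)^p = 1`, i.e. `∑_{j=1}^p C(p,j) D^j = 0`. Apply this to `F` with `D^k F = 0`: the terms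
with `j ≥ k` vanish, and for `2 ≤ j < k ≤ p` the prime `p` divides `C(p,j)` while
`p • D^j F = p • D (D^(j-1) F) = 0` by induction on `k`, because `D^(j-1) F` is killed by the
smaller power `D^(k-j+1)`. Only `p • D F = 0` is left.
-/

open MeasureTheory

/-- The additive derivative of `F` with respect to a transformation `S`. -/
def addDeriv {X A : Type*} [SubtractionMonoid A] (S : X → X) (F : X → A) : X → A :=
  fun x => F (S x) - F x

theorem sum_choose_succ_smul_pow_eq_zero {R : Type*} [Ring R] {d : R} {p : ℕ}
    (hd : (d + 1) ^ p = 1) :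
    ∑ j ∈ Finset.range p, p.choose (j + 1) • d ^ (j + 1) = 0 := by
  have h := (Commute.one_right d).add_pow p
  simp only [hd, one_pow, mul_one, Finset.sum_range_succ', pow_zero, Nat.choose_zero_right,
    Nat.cast_one] at h
  simpa [nsmul_eq_mul, Nat.cast_comm] using h

theorem Module.End.prime_smul_apply_eq_zero_of_pow_apply_eq_zero {R M : Type*} [Semiring R]
    [AddCommGroup M] [Module R M] {d : Module.End R M} {p : ℕ} (hp : p.Prime)
    (hd : (d + 1) ^ p = 1) : ∀ k ≤ p, ∀ x : M, (d ^ k) x = 0 → p • d x = 0 := by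
  intro k
  induction k using Nat.strong_induction_on with
  | _ k ih =>
  intro hkp x hx
  have hterm : ∀ j ∈ Finset.range p, j ≠ 0 → p.choose (j + 1) • (d ^ (j + 1)) x = 0 := by
    intro j hj hj0
    rw [Finset.mem_range] at hj
    rcases le_or_gt k (j + 1) with hkj | hjk
    · rw [← Nat.sub_add_cancel hkj, pow_add, Module.End.mul_apply, hx, map_zero, smul_zero]
    · obtain ⟨c, hc⟩ := hp.dvd_choose_self (Nat.succ_ne_zero j) (by omega)
      have hdeg : (d ^ (k - j)) ((d ^ j) x) = 0 := by
        rw [← Module.End.mul_apply, ← pow_add, Nat.sub_add_cancel (by omega), hx]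
      rw [hc, mul_comm, mul_smul, pow_succ', Module.End.mul_apply,
        ih (k - j) (by omega) (by omega) _ hdeg, smul_zero]
  have hsum := congrArg (· x) (sum_choose_succ_smul_pow_eq_zero hd)
  simp only [LinearMap.sum_apply, LinearMap.smul_apply, LinearMap.zero_apply] at hsum
  rwa [Finset.sum_eq_single_of_mem 0 (Finset.mem_range.2 hp.pos) hterm, zero_add, pow_one,
    Nat.choose_one_right] at hsum

theorem LinearMap.funLeft_pow (R : Type*) {X M : Type*} [Semiring R] [AddCommMonoid M]
    [Module R M] (T : X → X) (n : ℕ) :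
    LinearMap.funLeft R M T ^ n = LinearMap.funLeft R M T^[n] := by
  induction n with
  | zero => rfl
  | succ n ih => rw [pow_succ', ih, Module.End.mul_eq_comp, ← LinearMap.funLeft_comp,
      ← Function.iterate_succ]

section addDerivLinear

variable (R : Type*) {X M : Type*} [Semiring R] [AddCommGroup M] [Module R M]

def addDerivLinear (T : X → X) : Module.End R (X → M) := LinearMap.funLeft R M T - 1

theorem coe_addDerivLinear (T : X → X) :
    ⇑(addDerivLinear R T : Module.End R (X → M)) = addDeriv T :=
  rfl

theorem addDerivLinear_add_one_pow {T : X → X} {p : ℕ} (hTp : T^[p] = id) :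
    (addDerivLinear R T + 1 : Module.End R (X → M)) ^ p = 1 := by
  rw [addDerivLinear, sub_add_cancel, LinearMap.funLeft_pow, hTp]
  rfl

end addDerivLinear

theorem foldr_addDeriv_replicate {X A : Type*} [SubtractionMonoid A] (S : X → X) (F : X → A)
    (n : ℕ) : (List.replicate n S).foldr addDeriv F = (addDeriv S)^[n] F := by
  induction n with
  | zero => rfl
  | succ n ih => rw [List.replicate_succ, List.foldr_cons, ih, Function.iterate_succ_apply']

theorem p_smul_invariant_of_addPoly_general
    {X : Type*}
    (T : X → X)
    (p m k : ℕ) (hp : p.Prime) (hpk : k ≤ p)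
    (hTp : T^[p] = id)
    (F : X → ZMod (p ^ m))
    (hF : ∀ a : Fin k → ℕ, ∀ x,
      (((List.ofFn a).map (fun i => T^[i])).foldr addDeriv F) x = 0) :
    ∀ x, (p : ZMod (p ^ m)) * F (T x) = (p : ZMod (p ^ m)) * F x := by
  have hFk : (addDerivLinear ℤ T ^ k) F = 0 := by
    funext x
    simpa [Module.End.pow_apply, coe_addDerivLinear, ← foldr_addDeriv_replicate,
      List.ofFn_const, List.map_replicate] using hF (fun _ => 1) x
  have hpF := Module.End.prime_smul_apply_eq_zero_of_pow_apply_eq_zero hp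
    (addDerivLinear_add_one_pow ℤ hTp) k hpk F hFk
  intro x
  simpa [coe_addDerivLinear, addDeriv, mul_sub, sub_eq_zero] using congrFun hpF x

/-- Let `T` generate a measure-preserving `ℤ/pℤ`-action on a probability space (so
`T^p = id`), let `p` be a prime with `p ≥ k`, and let `F : X → ℤ/p^mℤ` be an additive
polynomial of degree `< k` (the `k`-fold iterated additive derivatives with respect to
powers of `T` vanish identically).  Then `p • F` is invariant under `T`. -/
theorem p_smul_invariant_of_addPoly
    {X : Type*} [MeasurableSpace X] (μ : Measure X) [IsProbabilityMeasure μ]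
    (T : X → X) (hT : MeasurePreserving T μ μ)
    (p m k : ℕ) (hp : p.Prime) (hpk : k ≤ p)
    (hTp : T^[p] = id)
    (F : X → ZMod (p ^ m))
    (hF : ∀ a : Fin k → ℕ, ∀ x,
      (((List.ofFn a).map (fun i => T^[i])).foldr addDeriv F) x = 0) :
    ∀ x, (p : ZMod (p ^ m)) * F (T x) = (p : ZMod (p ^ m)) * F x :=
  p_smul_invariant_of_addPoly_general T p m k hp hpk hTp F hF
end

section
/- Let S¹ act on itself ergodically via an action of G = ⊕_{p∈P}𝔽_p by rotations T_g x = φ(g)x with φ: G → S¹ a homomorphism with dense image, where P is an unbounded set of primes. Then every phase polynomial F: S¹ → S¹ (of any finite degree, with respect to this G-action) is a constant multiple of a character z ↦ zⁿ; in particular every phase polynomial has degree < 2. -/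
/-!
For each `g`, `Δ_g F` is a phase polynomial of lower degree, so by induction it is a.e. `c·xⁿ`.
As `φ g` has finite order `N`, the product of `Δ_g F` along the orbit of `x` telescopes to `1`,
which makes `x ↦ x^(nN)` constant; hence `n = 0` and `F` is an eigenfunction of every rotation
`x ↦ φ(g) x`. The `n`-th Fourier coefficient of such an eigenfunction vanishes unless `φ(g)ⁿ` is
the eigenvalue for every `g`, and by density of `φ` this can hold for a single `n` only, so `F` is
a.e. a multiple of `xⁿ`.
-/

open MeasureTheory

noncomputable instance : MeasurableSpace Circle := borel Circle
instance : BorelSpace Circle := ⟨rfl⟩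

open Finset

section PhasePoly

variable {G X U : Type*} [MeasurableSpace X] [Group U]

/-- `F` is a phase polynomial of degree `< m` for the action `T`. -/
def IsPhasePoly (T : G → X → X) (μ : Measure X) (m : ℕ) (F : X → U) : Prop :=
  ∀ h : Fin m → G, ∀ᵐ x ∂μ, ((List.ofFn h).map T).foldr mulDeriv F x = 1

theorem IsPhasePoly.mulDeriv {T : G → X → X} {μ : Measure X} {m : ℕ} {F : X → U}
    (hF : IsPhasePoly T μ (m + 1) F) (g : G) : IsPhasePoly T μ m (mulDeriv (T g) F) := by
  intro h
  have hsnoc : List.ofFn (Fin.snoc h g) = List.ofFn h ++ [g] := by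
    rw [List.ofFn_succ']
    simp [List.concat_eq_append]
  have := hF (Fin.snoc h g)
  rwa [hsnoc, List.map_append, List.foldr_append] at this

theorem mulDeriv_congr_ae {μ : Measure X} {S : X → X}
    (hS : Measure.QuasiMeasurePreserving S μ μ) {F F' : X → U} (h : F =ᵐ[μ] F') :
    mulDeriv S F =ᵐ[μ] mulDeriv S F' := by
  filter_upwards [h, hS.ae h] with x hx hSx
  simp only [mulDeriv, hx, hSx]

end PhasePoly

theorem prod_range_mulDeriv_iterate {X U : Type*} [CommGroup U] (S : X → X) (F : X → U)
    (N : ℕ) (x : X) :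
    ∏ j ∈ range N, mulDeriv S F (S^[j] x) = F (S^[N] x) * (F x)⁻¹ := by
  simpa [mulDeriv, div_eq_mul_inv, Function.iterate_succ_apply']
    using prod_range_div (fun j => F (S^[j] x)) N

theorem Circle.eq_zero_of_zpow_eq_one_of_denseRange {ι : Type*} {a : ι → Circle}
    (ha : DenseRange a) {k : ℤ} (h : ∀ i, a i ^ k = 1) : k = 0 := by
  have hall : ∀ z : Circle, z ^ k = 1 := fun z =>
    ha.induction_on z (isClosed_eq (continuous_zpow k) continuous_const) h
  by_contra hk
  apply Circle.exp_pi_ne_one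
  have hk' : (k : ℝ) ≠ 0 := Int.cast_ne_zero.2 hk
  simpa [← Circle.exp_intCast_mul, mul_div_cancel₀ _ hk'] using hall (Circle.exp (Real.pi / k))

theorem isAddTorsion_dfinsupp {ι : Type*} {β : ι → Type*} [∀ i, AddCommMonoid (β i)]
    (h : ∀ i, IsAddTorsion (β i)) : IsAddTorsion (Π₀ i, β i) := by
  classical
  intro g
  induction g using DFinsupp.induction with
  | h0 => exact IsOfFinAddOrder.zero
  | ha i b f _ _ ih => exact ((DFinsupp.singleAddHom β i).isOfFinAddOrder (h i b)).add ih

namespace AddCircle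

variable {T : ℝ} [hT : Fact (0 < T)]

theorem map_toCircle_ae_haarAddCircle :
    Filter.map toCircle (ae (haarAddCircle (T := T))) = ae (Measure.haar : Measure Circle) := by
  let E := (homeomorphCircle hT.out.ne').toMeasurableEquiv
  let ν := Measure.map E haarAddCircle
  have : IsProbabilityMeasure ν := Measure.isProbabilityMeasure_map E.measurable.aemeasurable
  have : ν.IsMulLeftInvariant := by
    refine ⟨fun y => ?_⟩
    obtain ⟨s, rfl⟩ := E.surjective y
    have hcomm : (E s * ·) ∘ E = E ∘ (· + s) := by
      funext t
      simp [E, homeomorphCircle_apply, toCircle_add, mul_comm]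
    rw [Measure.map_map (measurable_const_mul _) E.measurable, hcomm,
      ← Measure.map_map E.measurable (measurable_add_const s), map_add_right_eq_self]
  have hν := Measure.isMulInvariant_eq_smul_of_compactSpace ν Measure.haar
  have hc : Measure.haarScalarFactor ν Measure.haar ≠ 0 := by
    intro h
    have hν_univ := measure_univ (μ := ν)
    rw [hν, h, zero_smul] at hν_univ
    simp at hν_univ
  have hE : ⇑E = toCircle := funext (homeomorphCircle_apply hT.out.ne')
  rw [← hE, E.map_ae, show Measure.map E haarAddCircle = ν from rfl, hν,
    Measure.ae_smul_measure_eq (by exact_mod_cast hc)]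

theorem ae_haar_circle_iff {p : Circle → Prop} :
    (∀ᵐ z ∂Measure.haar, p z) ↔ ∀ᵐ t ∂haarAddCircle (T := T), p (toCircle t) := by
  rw [← map_toCircle_ae_haarAddCircle (T := T)]
  rfl

theorem fourierCoeff_comp_add_right {E : Type*} [NormedAddCommGroup E] [NormedSpace ℂ E]
    (f : AddCircle T → E) (a : AddCircle T) (n : ℤ) :
    fourierCoeff (fun t => f (t + a)) n = fourier n a • fourierCoeff f n := by
  simp only [fourierCoeff]
  rw [← integral_smul, ← integral_sub_right_eq_self _ a]
  congr 1
  funext t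
  rw [sub_add_cancel, smul_smul, fourier_apply, fourier_apply, fourier_apply]
  have hsplit : -n • (t - a) = n • a + -n • t := by
    simp only [smul_sub, neg_smul]
    abel
  rw [hsplit, toCircle_add, Circle.coe_mul]

theorem ae_eq_fourierCoeff_mul_fourier {f : AddCircle T → ℂ} (hf : MemLp f 2 haarAddCircle)
    {n₀ : ℤ} (h : ∀ n ≠ n₀, fourierCoeff f n = 0) :
    f =ᵐ[haarAddCircle] fun t => fourierCoeff f n₀ * fourier n₀ t := by
  have hcoeff : fourierCoeff (hf.toLp f) = fourierCoeff f := fourierCoeff_congr_ae hf.coeFn_toLp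
  have hsingle : hf.toLp f = fourierCoeff f n₀ • fourierLp 2 n₀ := by
    refine (hasSum_fourier_series_L2 (hf.toLp f)).unique ?_
    rw [hcoeff]
    exact hasSum_single n₀ fun n hn => by rw [h n hn, zero_smul]
  filter_upwards [hf.coeFn_toLp, Lp.coeFn_smul (fourierCoeff f n₀) (fourierLp (T := T) 2 n₀),
    coeFn_fourierLp (T := T) 2 n₀] with t hft hsmul hfourier
  rw [← hft, hsingle, hsmul, Pi.smul_apply, hfourier, smul_eq_mul]

end AddCircle

open AddCircle in
theorem Circle.exists_ae_eq_mul_zpow_of_eigenfunction {ι : Type*} {a : ι → Circle}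
    (ha : DenseRange a) {F : Circle → Circle} (hF : Measurable F) {c : ι → Circle}
    (hc : ∀ i, ∀ᵐ x ∂Measure.haar, F (a i * x) = c i * F x) :
    ∃ (b : Circle) (n : ℤ), ∀ᵐ x ∂Measure.haar, F x = b * x ^ n := by
  let f : AddCircle (1 : ℝ) → ℂ := fun t => F (toCircle t)
  have hf_norm : ∀ t, ‖f t‖ = 1 := fun t => Circle.norm_coe _
  have hf_meas : Measurable f := by fun_prop
  have hf2 : MemLp f 2 haarAddCircle :=
    .of_bound hf_meas.aestronglyMeasurable 1 (ae_of_all _ fun t => (hf_norm t).le)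
  have heigen : ∀ i n, fourierCoeff f n ≠ 0 → a i ^ n = c i := by
    intro i n hn
    obtain ⟨s, hs⟩ := (homeomorphCircle one_ne_zero).surjective (a i)
    rw [homeomorphCircle_apply] at hs
    have htrans : (fun t => f (t + s)) =ᵐ[haarAddCircle] fun t => (c i : ℂ) * f t := by
      filter_upwards [ae_haar_circle_iff.1 (hc i)] with t ht
      simp only [f, toCircle_add, hs, mul_comm _ (a i), ht, Circle.coe_mul]
    have hcoeff := fourierCoeff_comp_add_right f s n
    rw [fourierCoeff_congr_ae htrans, fourierCoeff.const_mul, fourier_apply, toCircle_zsmul, hs,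
      smul_eq_mul] at hcoeff
    exact Circle.coe_injective (mul_right_cancel₀ hn hcoeff).symm
  obtain ⟨n₀, hn₀⟩ : ∃ n₀, fourierCoeff f n₀ ≠ 0 := by
    by_contra! hzero
    obtain ⟨t, ht⟩ := (ae_eq_fourierCoeff_mul_fourier hf2 (n₀ := 0) fun n _ => hzero n).exists
    simpa [hzero, hf_norm] using congrArg norm ht
  have hsupport : ∀ n ≠ n₀, fourierCoeff f n = 0 := by
    intro n hn
    by_contra hne
    refine hn (sub_eq_zero.1 (Circle.eq_zero_of_zpow_eq_one_of_denseRange ha fun i => ?_))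
    rw [zpow_sub, heigen i n hne, heigen i n₀ hn₀, mul_inv_cancel]
  have hf_eq := ae_eq_fourierCoeff_mul_fourier hf2 hsupport
  have hb : ‖fourierCoeff f n₀‖ = 1 := by
    obtain ⟨t, ht⟩ := hf_eq.exists
    simpa [hf_norm, Circle.norm_coe] using (congrArg norm ht).symm
  refine ⟨⟨fourierCoeff f n₀, mem_sphere_zero_iff_norm.2 hb⟩, n₀,
    (ae_haar_circle_iff (T := 1)).2 ?_⟩
  filter_upwards [hf_eq] with t ht
  refine Circle.coe_injective (ht.trans ?_)
  rw [fourier_apply, toCircle_zsmul]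
  rfl

theorem Circle.eq_zero_of_mulDeriv_ae_eq_mul_zpow {a : Circle} (ha : IsOfFinOrder a)
    {F : Circle → Circle} {c : Circle} {n : ℤ}
    (h : ∀ᵐ x ∂Measure.haar, mulDeriv (a * ·) F x = c * x ^ n) : n = 0 := by
  obtain ⟨N, hN, haN⟩ := isOfFinOrder_iff_pow_eq_one.1 ha
  set K := ∏ j ∈ range N, c * (a ^ j) ^ n
  have hae : ∀ᵐ x ∂Measure.haar, K * x ^ (n * N) = 1 := by
    have hshift : ∀ j : ℕ, ∀ᵐ x ∂Measure.haar,
        mulDeriv (a * ·) F (a ^ j * x) = c * (a ^ j * x) ^ n :=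
      fun j => (eventually_mul_left_iff _ (a ^ j)).2 h
    filter_upwards [ae_all_iff.2 hshift] with x hx
    have htel := prod_range_mulDeriv_iterate (a * ·) F N x
    simp only [mul_left_iterate_apply, haN, one_mul, mul_inv_cancel, hx] at htel
    rw [← htel, zpow_mul, zpow_natCast]
    simp only [K, mul_zpow, ← mul_assoc, prod_mul_distrib, prod_const, card_range]
  have hall : ∀ x : Circle, K * x ^ (n * N) = 1 := congrFun
    ((Continuous.ae_eq_iff_eq _ (by fun_prop) continuous_const).1 hae)
  have hK : K = 1 := by simpa using hall 1
  have hnN : n * N = 0 :=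
    Circle.eq_zero_of_zpow_eq_one_of_denseRange denseRange_id fun x => by simpa [hK] using hall x
  simpa [hN.ne'] using hnN

theorem IsPhasePoly.exists_ae_eq_mul_zpow {ι : Type*} {a : ι → Circle} (ha : DenseRange a)
    (hfin : ∀ i, IsOfFinOrder (a i)) {m : ℕ} {F : Circle → Circle} (hF : Measurable F)
    (hpoly : IsPhasePoly (fun i x => a i * x) Measure.haar m F) :
    ∃ (b : Circle) (n : ℤ), ∀ᵐ x ∂Measure.haar, F x = b * x ^ n := by
  induction m generalizing F with
  | zero => exact ⟨1, 0, by simpa using hpoly Fin.elim0⟩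
  | succ m ih =>
    have heigen : ∀ i, ∃ c : Circle, ∀ᵐ x ∂Measure.haar, F (a i * x) = c * F x := by
      intro i
      obtain ⟨c, n, hc⟩ :=
        ih ((hF.comp (measurable_const_mul (a i))).mul hF.inv) (hpoly.mulDeriv i)
      obtain rfl := Circle.eq_zero_of_mulDeriv_ae_eq_mul_zpow (hfin i) hc
      refine ⟨c, hc.mono fun x hx => ?_⟩
      simpa [mulDeriv, mul_inv_eq_iff_eq_mul] using hx
    choose c hc using heigen
    exact Circle.exists_ae_eq_mul_zpow_of_eigenfunction ha hF hc

theorem isPhasePoly_two_of_ae_eq_mul_zpow {ι : Type*} (a : ι → Circle) {F : Circle → Circle}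
    {b : Circle} {n : ℤ} (hF : ∀ᵐ x ∂Measure.haar, F x = b * x ^ n) :
    IsPhasePoly (fun i x => a i * x) Measure.haar 2 F := by
  have hrot : ∀ y : Circle, Measure.QuasiMeasurePreserving (y * ·) Measure.haar Measure.haar :=
    fun y => (measurePreserving_mul_left _ y).quasiMeasurePreserving
  intro h
  have h1 : mulDeriv (a (h 1) * ·) F =ᵐ[Measure.haar] fun _ => a (h 1) ^ n := by
    refine (mulDeriv_congr_ae (hrot _) hF).trans (ae_of_all _ fun x => ?_)
    simp only [mulDeriv, mul_zpow, ← div_eq_mul_inv, mul_div_mul_left_eq_div, mul_div_cancel_right]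
  filter_upwards [mulDeriv_congr_ae (hrot (a (h 0))) h1] with x hx
  simpa [List.ofFn_succ, mulDeriv] using hx

theorem phasePoly_on_circle_is_character_general
    (P : Set ℕ) (hP : ∀ p ∈ P, Nat.Prime p)
    (φ : (Π₀ p : P, ZMod p) → Circle)
    (hhom : ∀ g h : Π₀ p : P, ZMod p, φ (g + h) = φ g * φ h)
    (hdense : DenseRange φ)
    (F : Circle → Circle) (hFmeas : Measurable F)
    (m : ℕ)
    (hpoly : ∀ h : Fin m → (Π₀ p : P, ZMod p),
      ∀ᵐ x ∂(Measure.haar : Measure Circle),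
        (((List.ofFn h).map (fun g (y : Circle) => φ g * y)).foldr mulDeriv F) x = 1) :
    (∃ (c : Circle) (n : ℤ), ∀ᵐ x ∂(Measure.haar : Measure Circle), F x = c * x ^ n) ∧
    (∀ h : Fin 2 → (Π₀ p : P, ZMod p),
      ∀ᵐ x ∂(Measure.haar : Measure Circle),
        (((List.ofFn h).map (fun g (y : Circle) => φ g * y)).foldr mulDeriv F) x = 1) := by
  have htorsion : IsAddTorsion (Π₀ p : P, ZMod p) := isAddTorsion_dfinsupp fun p =>
    have : NeZero (p : ℕ) := ⟨(hP p p.2).ne_zero⟩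
    isAddTorsion_of_finite
  let ψ : (Π₀ p : P, ZMod p) →+ Additive Circle :=
    AddMonoidHom.mk' (fun g => Additive.ofMul (φ g)) hhom
  have hfin : ∀ g, IsOfFinOrder (φ g) :=
    fun g => isOfFinAddOrder_ofMul_iff.1 (ψ.isOfFinAddOrder (htorsion g))
  obtain ⟨c, n, hF⟩ := IsPhasePoly.exists_ae_eq_mul_zpow hdense hfin hFmeas hpoly
  exact ⟨⟨c, n, hF⟩, isPhasePoly_two_of_ae_eq_mul_zpow φ hF⟩

/-- Let `G = ⊕_{p ∈ P} 𝔽_p` (with `P` an unbounded set of primes) act ergodically on the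
circle by rotations `T_g x = φ(g) x`, where `φ` is a homomorphism with dense image.
Then every phase polynomial `F : S¹ → S¹` of any finite degree with respect to this
action is (a.e.) a constant multiple of a character `z ↦ zⁿ`; in particular every phase
polynomial has degree `< 2`. -/
theorem phasePoly_on_circle_is_character
    (P : Set ℕ) (hP : ∀ p ∈ P, Nat.Prime p) (hunb : ∀ N : ℕ, ∃ p ∈ P, N < p)
    (φ : (Π₀ p : P, ZMod p) → Circle)
    (hhom : ∀ g h : Π₀ p : P, ZMod p, φ (g + h) = φ g * φ h)
    (hdense : DenseRange φ)
    (F : Circle → Circle) (hFmeas : Measurable F)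
    (m : ℕ)
    (hpoly : ∀ h : Fin m → (Π₀ p : P, ZMod p),
      ∀ᵐ x ∂(Measure.haar : Measure Circle),
        (((List.ofFn h).map (fun g (y : Circle) => φ g * y)).foldr mulDeriv F) x = 1) :
    (∃ (c : Circle) (n : ℤ), ∀ᵐ x ∂(Measure.haar : Measure Circle), F x = c * x ^ n) ∧
    (∀ h : Fin 2 → (Π₀ p : P, ZMod p),
      ∀ᵐ x ∂(Measure.haar : Measure Circle),
        (((List.ofFn h).map (fun g (y : Circle) => φ g * y)).foldr mulDeriv F) x = 1) :=
  phasePoly_on_circle_is_character_general P hP φ hhom hdense F hFmeas m hpoly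
end

section
/- Let G be a countable abelian group acting ergodically and measure-preservingly on a probability space X, and let φ, ψ: X → S¹ be phase polynomials of degree < k such that φ/ψ is not a.e. constant. Then ‖φ − ψ‖_{L²(X)} ≥ √2 / 2^{k−2}. -/
/-!
Put `χ = φ ψ⁻¹`, again a phase polynomial of degree `< k`, with `‖φ - ψ‖₂ = ‖χ - 1‖₂`; we show
`‖χ - 1‖₂ ≥ √2 / 2^(k-2)` for every non-constant such `χ` by induction on `k`. If some derivative
`Δ_g χ` is not a.e. constant, it has degree `< k - 1` and `‖Δ_g χ - 1‖₂ ≤ 2 ‖χ - 1‖₂`, since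
`Δ_g χ - 1` has the norm of `χ ∘ T g - χ`. Otherwise ergodicity produces `g` with `Δ_g χ = c ≠ 1`
a.e., so `∫ χ = c ∫ χ` forces `∫ χ = 0`, and then `‖χ - 1‖₂² = ∫ (2 - 2 Re χ) = 2`.
-/

open MeasureTheory

lemma Complex.sq_norm_sub_one_of_norm_eq_one {z : ℂ} (hz : ‖z‖ = 1) :
    ‖z - 1‖ ^ 2 = 2 - 2 * z.re := by
  rw [Complex.sq_norm, Complex.normSq_sub, Complex.normSq_eq_norm_sq, hz]
  simp only [one_pow, map_one, mul_one, sub_left_inj]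
  ring

lemma Circle.norm_coe_mul_inv_sub_one (a b : Circle) :
    ‖(a : ℂ) * (b : ℂ)⁻¹ - 1‖ = ‖(a : ℂ) - b‖ := by
  rw [← div_eq_mul_inv, div_sub_one (Circle.coe_ne_zero b), norm_div, Circle.norm_coe, div_one]

lemma Circle.measurable_coe [MeasurableSpace Circle] [BorelSpace Circle] :
    Measurable (fun z : Circle => (z : ℂ)) :=
  Continuous.measurable (α := Circle) continuous_subtype_val

section PhasePolynomial

variable {G X U : Type*}

lemma mulDeriv_mul_inv [CommGroup U] (S : X → X) (φ ψ : X → U) :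
    mulDeriv S (φ * ψ⁻¹) = mulDeriv S φ * (mulDeriv S ψ)⁻¹ := by
  funext x
  simp only [mulDeriv, Pi.mul_apply, Pi.inv_apply, ← div_eq_mul_inv]
  exact div_div_div_comm _ _ _ _

lemma foldr_mulDeriv_mul_inv [CommGroup U] (L : List (X → X)) (φ ψ : X → U) :
    L.foldr mulDeriv (φ * ψ⁻¹) = L.foldr mulDeriv φ * (L.foldr mulDeriv ψ)⁻¹ := by
  induction L with
  | nil => rfl
  | cons S L ih => simp only [List.foldr_cons, ih, mulDeriv_mul_inv]

variable [MeasurableSpace X]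

def IsPhasePolyLT [Group U] (μ : Measure X) (T : G → X → X) (k : ℕ) (χ : X → U) : Prop :=
  ∀ h : Fin k → G, ∀ᵐ x ∂μ, (((List.ofFn h).map T).foldr mulDeriv χ) x = 1

variable {μ : Measure X} {T : G → X → X} {k : ℕ}

lemma IsPhasePolyLT.ae_eq_one [Group U] {χ : X → U} (hχ : IsPhasePolyLT μ T 0 χ) :
    ∀ᵐ x ∂μ, χ x = 1 := by
  simpa using hχ Fin.elim0

lemma IsPhasePolyLT.mulDeriv [Group U] {χ : X → U} (hχ : IsPhasePolyLT μ T (k + 1) χ) (g : G) :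
    IsPhasePolyLT μ T k (mulDeriv (T g) χ) := fun h => by
  simpa only [List.ofFn_succ', Fin.snoc_castSucc, Fin.snoc_last, List.concat_eq_append,
    List.map_append, List.foldr_append, List.map_singleton, List.foldr_cons, List.foldr_nil]
    using hχ (Fin.snoc h g)

lemma IsPhasePolyLT.mul_inv [CommGroup U] {φ ψ : X → U} (hφ : IsPhasePolyLT μ T k φ)
    (hψ : IsPhasePolyLT μ T k ψ) : IsPhasePolyLT μ T k (φ * ψ⁻¹) := fun h => by
  filter_upwards [hφ h, hψ h] with x hφx hψx
  rw [foldr_mulDeriv_mul_inv, Pi.mul_apply, Pi.inv_apply, hφx, hψx, inv_one, mul_one]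

end PhasePolynomial

section Ergodic

variable {G X : Type*} [MeasurableSpace X] {μ : Measure X} {T : G → X → X}

def IsErgodicFamily (μ : Measure X) (T : G → X → X) : Prop :=
  ∀ f : X → ℂ, Measurable f → (∀ g : G, ∀ᵐ x ∂μ, f (T g x) = f x) → ∃ c : ℂ, ∀ᵐ x ∂μ, f x = c

variable [MeasurableSpace Circle] [BorelSpace Circle] [NeZero μ]

lemma IsErgodicFamily.exists_ae_eq_of_mulDeriv_ae_eq_one (herg : IsErgodicFamily μ T)
    {χ : X → Circle} (hχ : Measurable χ) (hinv : ∀ g, ∀ᵐ x ∂μ, mulDeriv (T g) χ x = 1) :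
    ∃ c : Circle, ∀ᵐ x ∂μ, χ x = c := by
  obtain ⟨c, hc⟩ := herg (fun x => (χ x : ℂ)) (Circle.measurable_coe.comp hχ) fun g =>
    (hinv g).mono fun x hx => congrArg (fun z : Circle => (z : ℂ)) (mul_inv_eq_one.mp hx)
  obtain ⟨x₀, hx₀⟩ := hc.exists
  exact ⟨χ x₀, hc.mono fun x hx => Circle.coe_injective (hx.trans hx₀.symm)⟩

lemma IsErgodicFamily.exists_mulDeriv_ae_eq_ne_one (herg : IsErgodicFamily μ T)
    {χ : X → Circle} (hχ : Measurable χ) (hnc : ¬ ∃ c : Circle, ∀ᵐ x ∂μ, χ x = c)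
    (hder : ∀ g, ∃ c : Circle, ∀ᵐ x ∂μ, mulDeriv (T g) χ x = c) :
    ∃ g, ∃ c : Circle, c ≠ 1 ∧ ∀ᵐ x ∂μ, mulDeriv (T g) χ x = c := by
  by_contra h
  refine hnc (herg.exists_ae_eq_of_mulDeriv_ae_eq_one hχ fun g => ?_)
  obtain ⟨c, hc⟩ := hder g
  obtain rfl : c = 1 := by_contra fun hc1 => h ⟨g, c, hc1, hc⟩
  exact hc

end Ergodic

section L2

variable {X : Type*} [MeasurableSpace X] {μ : Measure X}

lemma integral_eq_zero_of_ae_comp_eq_mul {S : X → X} (hS : MeasurePreserving S μ μ) {f : X → ℂ}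
    (hf : AEStronglyMeasurable f μ) {c : ℂ} (hc : c ≠ 1) (h : ∀ᵐ x ∂μ, f (S x) = c * f x) :
    ∫ x, f x ∂μ = 0 := by
  have hinv : ∫ x, f (S x) ∂μ = ∫ x, f x ∂μ := by
    rw [← integral_map hS.aemeasurable (hS.map_eq.symm ▸ hf), hS.map_eq]
  have : (c - 1) * ∫ x, f x ∂μ = 0 := by
    rw [sub_mul, one_mul, ← integral_const_mul, ← integral_congr_ae h, hinv, sub_self]
  exact (mul_eq_zero.mp this).resolve_left (sub_ne_zero.mpr hc)

lemma eLpNorm_sub_one_of_norm_eq_one_of_integral_eq_zero [IsProbabilityMeasure μ] {f : X → ℂ}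
    (hf : AEStronglyMeasurable f μ) (hnorm : ∀ x, ‖f x‖ = 1) (h : ∫ x, f x ∂μ = 0) :
    eLpNorm (fun x => f x - 1) 2 μ = ENNReal.ofReal √2 := by
  have hint : Integrable f μ := Integrable.of_bound hf 1 (ae_of_all _ fun x => (hnorm x).le)
  have hint_re : Integrable (fun x => (f x).re) μ := hint.re
  have hre : ∫ x, (f x).re ∂μ = 0 := by simpa [h] using integral_re hint
  have hmem : MemLp (fun x => f x - 1) 2 μ :=
    MemLp.of_bound (hf.sub aestronglyMeasurable_const) 2
      (ae_of_all _ fun x => (norm_sub_le _ _).trans (by rw [hnorm, norm_one]; norm_num))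
  have hsq : ∫ x, ‖f x - 1‖ ^ (2 : ℝ) ∂μ = 2 := by
    simp_rw [Real.rpow_two, Complex.sq_norm_sub_one_of_norm_eq_one (hnorm _)]
    rw [integral_sub (integrable_const _) (hint_re.const_mul 2), integral_const_mul]
    simp [hre]
  rw [hmem.eLpNorm_eq_integral_rpow_norm two_ne_zero ENNReal.ofNat_ne_top, ENNReal.toReal_ofNat,
    hsq, Real.sqrt_eq_rpow, one_div]

variable [MeasurableSpace Circle] [BorelSpace Circle]

lemma eLpNorm_sub_one_eq_sqrt_two_of_mulDeriv_ae_eq [IsProbabilityMeasure μ] {S : X → X}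
    (hS : MeasurePreserving S μ μ) {χ : X → Circle} (hχ : Measurable χ) {c : Circle}
    (hc1 : c ≠ 1) (hc : ∀ᵐ x ∂μ, mulDeriv S χ x = c) :
    eLpNorm (fun x => (χ x : ℂ) - 1) 2 μ = ENNReal.ofReal √2 := by
  have hm := (Circle.measurable_coe.comp hχ).aestronglyMeasurable (μ := μ)
  refine eLpNorm_sub_one_of_norm_eq_one_of_integral_eq_zero hm (fun x => Circle.norm_coe _) ?_
  refine integral_eq_zero_of_ae_comp_eq_mul hS hm (c := c) (mt Circle.coe_eq_one.mp hc1) ?_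
  filter_upwards [hc] with x hx
  rw [← hx, mulDeriv, Circle.coe_mul, Circle.coe_inv,
    inv_mul_cancel_right₀ (Circle.coe_ne_zero _)]

lemma eLpNorm_mulDeriv_sub_one_le {S : X → X} (hS : MeasurePreserving S μ μ) {χ : X → Circle}
    (hχ : Measurable χ) :
    eLpNorm (fun x => ((mulDeriv S χ x : Circle) : ℂ) - 1) 2 μ ≤
      2 * eLpNorm (fun x => (χ x : ℂ) - 1) 2 μ := by
  set f : X → ℂ := fun x => (χ x : ℂ) - 1
  have hf : AEStronglyMeasurable f μ :=
    ((Circle.measurable_coe.comp hχ).sub measurable_const).aestronglyMeasurable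
  calc eLpNorm (fun x => ((mulDeriv S χ x : Circle) : ℂ) - 1) 2 μ = eLpNorm (f ∘ S - f) 2 μ :=
        eLpNorm_congr_norm_ae (ae_of_all _ fun x => by
          simp only [f, mulDeriv, Function.comp, Pi.sub_apply, Circle.coe_mul, Circle.coe_inv,
            Circle.norm_coe_mul_inv_sub_one, sub_sub_sub_cancel_right])
    _ ≤ eLpNorm (f ∘ S) 2 μ + eLpNorm f 2 μ :=
        eLpNorm_sub_le (hf.comp_measurePreserving hS) hf one_le_two
    _ = 2 * eLpNorm f 2 μ := by rw [eLpNorm_comp_measurePreserving hf hS, two_mul]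

end L2

lemma ofReal_sqrt_two_div_zpow_eq_two_mul (k : ℕ) :
    ENNReal.ofReal (√2 / 2 ^ ((k : ℤ) - 2)) =
      2 * ENNReal.ofReal (√2 / 2 ^ (((k + 1 : ℕ) : ℤ) - 2)) := by
  rw [← ENNReal.ofReal_ofNat 2, ← ENNReal.ofReal_mul zero_le_two, Nat.cast_succ,
    show (k : ℤ) + 1 - 2 = (k - 2) + 1 by ring, zpow_add_one₀ two_ne_zero]
  congr 1
  field_simp

theorem ofReal_le_eLpNorm_sub_one_of_isPhasePolyLT
    [MeasurableSpace Circle] [BorelSpace Circle] {G X : Type*} [MeasurableSpace X]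
    {μ : Measure X} [IsProbabilityMeasure μ] {T : G → X → X}
    (hmp : ∀ g, MeasurePreserving (T g) μ μ) (herg : IsErgodicFamily μ T) {k : ℕ}
    {χ : X → Circle} (hpoly : IsPhasePolyLT μ T k χ) (hχ : Measurable χ)
    (hnc : ¬ ∃ c : Circle, ∀ᵐ x ∂μ, χ x = c) :
    ENNReal.ofReal (√2 / 2 ^ ((k : ℤ) - 2)) ≤ eLpNorm (fun x => (χ x : ℂ) - 1) 2 μ := by
  induction k generalizing χ with
  | zero => exact (hnc ⟨1, hpoly.ae_eq_one⟩).elim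
  | succ k ih =>
    by_cases hder : ∃ g, ¬ ∃ c : Circle, ∀ᵐ x ∂μ, mulDeriv (T g) χ x = c
    · obtain ⟨g, hg⟩ := hder
      have hχ' : Measurable (mulDeriv (T g) χ) := (hχ.comp (hmp g).measurable).mul hχ.inv
      have h := (ih (hpoly.mulDeriv g) hχ' hg).trans (eLpNorm_mulDeriv_sub_one_le (hmp g) hχ)
      rwa [ofReal_sqrt_two_div_zpow_eq_two_mul,
        ENNReal.mul_le_mul_iff_right two_ne_zero ENNReal.ofNat_ne_top] at h
    · push Not at hder
      obtain ⟨g, c, hc1, hc⟩ := herg.exists_mulDeriv_ae_eq_ne_one hχ hnc hder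
      have hk : k ≠ 0 := by
        rintro rfl
        obtain ⟨x, hx1, hxc⟩ := ((hpoly.mulDeriv g).ae_eq_one.and hc).exists
        exact hc1 (hxc.symm.trans hx1)
      rw [eLpNorm_sub_one_eq_sqrt_two_of_mulDeriv_ae_eq (hmp g) hχ hc1 hc]
      refine ENNReal.ofReal_le_ofReal (div_le_self (Real.sqrt_nonneg 2) ?_)
      exact one_le_zpow₀ one_le_two (by omega)

theorem phasePoly_separation_general
    [MeasurableSpace Circle] [BorelSpace Circle]
    {G X : Type*} [MeasurableSpace X]
    (μ : Measure X) [IsProbabilityMeasure μ]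
    (T : G → X → X) (hmp : ∀ g : G, MeasurePreserving (T g) μ μ)
    (herg : ∀ f : X → ℂ, Measurable f → (∀ g : G, ∀ᵐ x ∂μ, f (T g x) = f x) →
      ∃ c : ℂ, ∀ᵐ x ∂μ, f x = c)
    (k : ℕ)
    (φ ψ : X → Circle) (hφmeas : Measurable φ) (hψmeas : Measurable ψ)
    (hφ : ∀ h : Fin k → G, ∀ᵐ x ∂μ, (((List.ofFn h).map T).foldr mulDeriv φ) x = 1)
    (hψ : ∀ h : Fin k → G, ∀ᵐ x ∂μ, (((List.ofFn h).map T).foldr mulDeriv ψ) x = 1)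
    (hnc : ¬ ∃ c : Circle, ∀ᵐ x ∂μ, φ x * (ψ x)⁻¹ = c) :
    ENNReal.ofReal (Real.sqrt 2 / (2 : ℝ) ^ ((k : ℤ) - 2)) ≤
      eLpNorm (fun x => (φ x : ℂ) - (ψ x : ℂ)) 2 μ := by
  have hpoly : IsPhasePolyLT μ T k (φ * ψ⁻¹) := IsPhasePolyLT.mul_inv hφ hψ
  calc _ ≤ eLpNorm (fun x => (((φ * ψ⁻¹) x : Circle) : ℂ) - 1) 2 μ :=
        ofReal_le_eLpNorm_sub_one_of_isPhasePolyLT hmp herg hpoly (hφmeas.mul hψmeas.inv) hnc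
    _ = eLpNorm (fun x => (φ x : ℂ) - (ψ x : ℂ)) 2 μ :=
        eLpNorm_congr_norm_ae (ae_of_all _ fun x => Circle.norm_coe_mul_inv_sub_one (φ x) (ψ x))

/-- Separation lemma: if `G` is a countable abelian group acting ergodically and
measure-preservingly on a probability space `X`, and `φ, ψ : X → S¹` are phase
polynomials of degree `< k` (with `k ≥ 1`) such that `φ/ψ` is not a.e. constant, then
`‖φ − ψ‖_{L²(X)} ≥ √2 / 2^{k−2}`. -/
theorem phasePoly_separation
    [MeasurableSpace Circle] [BorelSpace Circle]
    {G X : Type*} [AddCommGroup G] [Countable G] [MeasurableSpace X]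
    (μ : Measure X) [IsProbabilityMeasure μ]
    (T : G → X → X) (hmp : ∀ g : G, MeasurePreserving (T g) μ μ)
    (hT0 : T 0 = id) (hTadd : ∀ g h : G, T (g + h) = T g ∘ T h)
    (herg : ∀ f : X → ℂ, Measurable f → (∀ g : G, ∀ᵐ x ∂μ, f (T g x) = f x) →
      ∃ c : ℂ, ∀ᵐ x ∂μ, f x = c)
    (k : ℕ) (hk : 1 ≤ k)
    (φ ψ : X → Circle) (hφmeas : Measurable φ) (hψmeas : Measurable ψ)
    (hφ : ∀ h : Fin k → G, ∀ᵐ x ∂μ, (((List.ofFn h).map T).foldr mulDeriv φ) x = 1)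
    (hψ : ∀ h : Fin k → G, ∀ᵐ x ∂μ, (((List.ofFn h).map T).foldr mulDeriv ψ) x = 1)
    (hnc : ¬ ∃ c : Circle, ∀ᵐ x ∂μ, φ x * (ψ x)⁻¹ = c) :
    ENNReal.ofReal (Real.sqrt 2 / (2 : ℝ) ^ ((k : ℤ) - 2)) ≤
      eLpNorm (fun x => (φ x : ℂ) - (ψ x : ℂ)) 2 μ :=
  phasePoly_separation_general μ T hmp herg k φ ψ hφmeas hψmeas hφ hψ hnc
end

section
/- Let p be prime, m, l ≥ 1, and let b_j: ℤ/p^lℤ → {0,1,…,p−1} ⊆ ℤ/p^lℤ be the j-th digit map in base p (so that x = Σ_j b_j(x) p^j). If P: X → ℤ/p^mℤ is a polynomial of degree < d with respect to a measure-preserving action of an abelian group on X (meaning the d-fold additive derivative vanishes), then for each 0 ≤ j ≤ m−1 the composition b_j ∘ P (viewed with values in ℤ/p^lℤ) is a polynomial of degree < C for some constant C depending only on l, d, p, j. -/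
open MeasureTheory

/-- The `j`-th digit map in base `p`: `b_j(x)` is the `j`-th base-`p` digit of `x`,
viewed in `ℤ/p^lℤ` via the embedding `{0,1,…,p−1} ⊆ ℤ/p^lℤ`. -/
def digitMap (p l : ℕ) {m : ℕ} (j : ℕ) (x : ZMod (p ^ m)) : ZMod (p ^ l) :=
  (((x.val / p ^ j) % p : ℕ) : ZMod (p ^ l))

/-!
Reducing modulo `p^(j+1)`, the digit `b_j ∘ P` becomes `f ∘ Q` with `Q = P mod p^(j+1)` again a
polynomial and `f : ℤ/p^(j+1) → ℤ/p^l` arbitrary. Every such `f` is a polynomial for the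
translation action of `ℤ/p^(j+1)`: since `(X - 1)^(p^n) ≡ X^(p^n) - 1 (mod p)` and shifting by
`p^n` is the identity, the `p^n`-th forward difference is divisible by `p`, so the
`p^n l`-th one vanishes. Composing an arbitrary function on a finite abelian group with a
polynomial gives a polynomial, by induction on the degree through
`Δ_g (f ∘ Q) = ∑_α 1[Δ_g Q = α] · (Δ_α f) ∘ Q` and the Leibniz rule. The measure-preserving maps
preserve null sets, so all of this can be done almost everywhere.
-/

open Filter Finset

section IsPolyLT

variable {X Γ M : Type*}

/-- `F` is a polynomial of degree `< k` for the transformations `T`, up to `L`-negligible sets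
(`L` is the almost-everywhere filter in the application). -/
def IsPolyLT [AddGroup M] (T : Γ → X → X) (L : Filter X) : ℕ → (X → M) → Prop
  | 0, F => F =ᶠ[L] 0
  | k + 1, F => ∀ g, IsPolyLT T L k (addDeriv (T g) F)

variable [AddCommGroup M] {T : Γ → X → X} {L : Filter X}

theorem isPolyLT_iff_forall_foldr {k : ℕ} {F : X → M} :
    IsPolyLT T L k F ↔
      ∀ a : Fin k → Γ, ∀ᶠ x in L, ((List.ofFn a).map T).foldr addDeriv F x = 0 := by
  induction k generalizing F with
  | zero => simp [IsPolyLT, EventuallyEq]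
  | succ k ih =>
    simp only [IsPolyLT, ih, List.ofFn_succ', List.concat_eq_append, List.map_append,
      List.foldr_append]
    constructor
    · intro h a
      exact h (a (Fin.last k)) fun i => a i.castSucc
    · intro h g a
      simpa using h (Fin.snoc a g)

theorem addDeriv_add (S : X → X) (F G : X → M) :
    addDeriv S (F + G) = addDeriv S F + addDeriv S G := by
  ext x
  simp only [addDeriv, Pi.add_apply]
  abel

theorem addDeriv_comp_of_commute {S R : X → X} (h : Function.Commute S R) (F : X → M) :
    addDeriv S (F ∘ R) = addDeriv S F ∘ R := by
  ext x
  simp [addDeriv, h.eq x]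

theorem addDeriv_mul {B : Type*} [Ring B] (S : X → X) (u v : X → B) :
    addDeriv S (u * v) = addDeriv S u * (v ∘ S) + u * addDeriv S v := by
  ext x
  simp only [addDeriv, Pi.add_apply, Pi.mul_apply, Function.comp_apply]
  noncomm_ring

theorem addDeriv_eventuallyEq_zero {S : X → X} (hS : Tendsto S L L) {F : X → M}
    (hF : F =ᶠ[L] 0) : addDeriv S F =ᶠ[L] 0 := by
  filter_upwards [hS.eventually hF, hF] with x h₁ h₂
  simp_all [addDeriv]

theorem IsPolyLT.of_eventuallyEq_zero (hL : ∀ g, Tendsto (T g) L L) {F : X → M}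
    (hF : F =ᶠ[L] 0) : ∀ k, IsPolyLT T L k F
  | 0 => hF
  | k + 1 => fun g => of_eventuallyEq_zero hL (addDeriv_eventuallyEq_zero (hL g) hF) k

theorem IsPolyLT.zero (hL : ∀ g, Tendsto (T g) L L) (k : ℕ) : IsPolyLT T L k (0 : X → M) :=
  of_eventuallyEq_zero hL EventuallyEq.rfl k

theorem IsPolyLT.add {k : ℕ} {F G : X → M} (hF : IsPolyLT T L k F) (hG : IsPolyLT T L k G) :
    IsPolyLT T L k (F + G) := by
  induction k generalizing F G with
  | zero => simpa [IsPolyLT] using EventuallyEq.add hF hG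
  | succ k ih =>
    intro g
    rw [addDeriv_add]
    exact ih (hF g) (hG g)

theorem IsPolyLT.map {N : Type*} [AddCommGroup N] (φ : M →+ N) {k : ℕ} {F : X → M}
    (hF : IsPolyLT T L k F) : IsPolyLT T L k (φ ∘ F) := by
  induction k generalizing F with
  | zero => simpa [IsPolyLT] using EventuallyEq.fun_comp hF φ
  | succ k ih =>
    intro g
    have : addDeriv (T g) (φ ∘ F) = φ ∘ addDeriv (T g) F := by
      ext x
      simp [addDeriv]
    rw [this]
    exact ih (hF g)

theorem IsPolyLT.comp_shift (hT : ∀ g h, Function.Commute (T g) (T h))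
    (hL : ∀ g, Tendsto (T g) L L) (s : Γ) :
    ∀ {k : ℕ} {F : X → M}, IsPolyLT T L k F → IsPolyLT T L k (F ∘ T s)
  | 0, _, hF => (hL s).eventually hF
  | _ + 1, F, hF => fun g => by
    rw [addDeriv_comp_of_commute (hT g s)]
    exact (hF g).comp_shift hT hL s

theorem IsPolyLT.mul {B : Type*} [Ring B] (hT : ∀ g h, Function.Commute (T g) (T h))
    (hL : ∀ g, Tendsto (T g) L L) :
    ∀ {s t : ℕ} {u v : X → B}, IsPolyLT T L s u → IsPolyLT T L t v → IsPolyLT T L (s + t) (u * v)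
  | 0, t, u, v, hu, _ => by
    refine of_eventuallyEq_zero hL ?_ _
    filter_upwards [show u =ᶠ[L] 0 from hu] with x hx
    simp [hx]
  | s + 1, 0, u, v, _, hv => by
    refine of_eventuallyEq_zero hL ?_ _
    filter_upwards [show v =ᶠ[L] 0 from hv] with x hx
    simp [hx]
  | s + 1, t + 1, u, v, hu, hv => by
    rw [show s + 1 + (t + 1) = s + (t + 1) + 1 by omega]
    intro g
    rw [addDeriv_mul]
    have h₁ := (hu g).mul hT hL (hv.comp_shift hT hL g)
    have h₂ := hu.mul hT hL (hv g)
    rw [show s + 1 + t = s + (t + 1) by omega] at h₂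
    exact h₁.add h₂
termination_by s t => s + t

end IsPolyLT

open Polynomial in
theorem Polynomial.exists_X_sub_one_pow_prime_pow_eq (p n : ℕ) [Fact p.Prime] :
    ∃ r : ℤ[X], (X - 1) ^ p ^ n = X ^ p ^ n - 1 + C (p : ℤ) * r := by
  obtain ⟨r, hr⟩ : C (p : ℤ) ∣ (X - 1) ^ p ^ n - (X ^ p ^ n - 1) := by
    have hmap : ((X - 1) ^ p ^ n - (X ^ p ^ n - 1) : ℤ[X]).map (Int.castRingHom (ZMod p)) = 0 := by
      simp [sub_pow_char_pow]
    rw [C_dvd_iff_dvd_coeff]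
    intro i
    rw [← ZMod.intCast_zmod_eq_zero_iff_dvd]
    simpa only [coeff_map, coeff_zero, eq_intCast] using congrArg (coeff · i) hmap
  exact ⟨r, by rw [← hr]; ring⟩

open Polynomial fwdDiff_aux in
theorem fwdDiff_iter_eq_zero_of_nsmul_eq_zero {p : ℕ} [Fact p.Prime] {n l : ℕ}
    {M G : Type*} [AddCommMonoid M] [AddCommGroup G] {h : M} (hh : p ^ n • h = 0)
    (hG : ∀ x : G, p ^ l • x = 0) (f : M → G) : (fwdDiff h)^[p ^ n * l] f = 0 := by
  set S := shiftₗ M G h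
  have hS : S ^ p ^ n = 1 := by
    ext f y
    simp [S, shiftₗ_pow_apply, hh]
  obtain ⟨r, hr⟩ := exists_X_sub_one_pow_prime_pow_eq p n
  have hD : fwdDiffₗ M G h ^ p ^ n = p * aeval S r := by
    have : fwdDiffₗ M G h = S - 1 := by simp [S, shiftₗ]
    simpa [this, hS] using congrArg (aeval S) hr
  rw [← coe_fwdDiffₗ_pow, pow_mul, hD, (Nat.cast_commute _ _).mul_pow, ← Nat.cast_pow]
  ext y
  rw [Module.End.mul_apply, Module.End.natCast_apply, Pi.smul_apply, hG]
  rfl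

theorem isPolyLT_translate_of_fwdDiff_iter_eq_zero {A G : Type*} [AddCommGroup A] [AddCommGroup G]
    {h : A} (hgen : ∀ α : A, ∃ m : ℕ, m • h = α) {k : ℕ} {f : A → G}
    (hf : (fwdDiff h)^[k] f = 0) : IsPolyLT (fun α y => y + α) ⊤ k f := by
  induction k generalizing f with
  | zero => simpa [IsPolyLT] using hf
  | succ k ih =>
    intro α
    obtain ⟨m, rfl⟩ := hgen α
    apply ih
    have htelescope : addDeriv (fun y => y + m • h) f =
        ∑ i ∈ range m, fun y => fwdDiff h f (y + i • h) := by
      ext y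
      simp only [addDeriv, Finset.sum_apply, fwdDiff, add_assoc, ← succ_nsmul]
      rw [Finset.sum_range_sub (fun i => f (y + i • h)), zero_nsmul, add_zero]
    rw [htelescope, fwdDiff_iter_finsetSum]
    refine Finset.sum_eq_zero fun i _ => ?_
    ext y
    rw [fwdDiff_iter_comp_add, ← Function.iterate_succ_apply, hf]
    rfl

theorem isPolyLT_translate_zmod_prime_pow {p : ℕ} [Fact p.Prime] {n l : ℕ}
    (f : ZMod (p ^ n) → ZMod (p ^ l)) : IsPolyLT (fun α y => y + α) ⊤ (p ^ n * l) f := by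
  have : NeZero (p ^ n) := ⟨pow_ne_zero n (Fact.out : p.Prime).ne_zero⟩
  refine isPolyLT_translate_of_fwdDiff_iter_eq_zero (h := 1) (fun α => ⟨α.val, by simp⟩) ?_
  exact fwdDiff_iter_eq_zero_of_nsmul_eq_zero (by simp) (fun x => by simp) f

def compDegBound (D₀ : ℕ) : ℕ → ℕ
  | 0 => 1
  | d + 1 => D₀ * (compDegBound D₀ d + 1)

section Comp

variable {X Γ A B : Type*} [AddCommGroup A] [Fintype A] [DecidableEq A] [Ring B]
  {T : Γ → X → X} {L : Filter X}

theorem addDeriv_comp_eq_sum (S : X → X) (f : A → B) (Q : X → A) :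
    addDeriv S (f ∘ Q) =
      ∑ α : A, (Pi.single α 1 ∘ addDeriv S Q) * (addDeriv (fun y => y + α) f ∘ Q) := by
  ext x
  simp [addDeriv, Pi.single_apply]

theorem IsPolyLT.comp_of_forall_comp (hT : ∀ g h, Function.Commute (T g) (T h))
    (hL : ∀ g, Tendsto (T g) L L) {d c : ℕ}
    (hc : ∀ (f : A → B) (Q : X → A), IsPolyLT T L d Q → IsPolyLT T L c (f ∘ Q))
    {D : ℕ} {f : A → B} (hf : IsPolyLT (fun α y => y + α) ⊤ D f) {Q : X → A}
    (hQ : IsPolyLT T L (d + 1) Q) : IsPolyLT T L (D * (c + 1)) (f ∘ Q) := by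
  induction D generalizing f with
  | zero =>
    obtain rfl : f = 0 := eventuallyEq_top.mp hf
    exact IsPolyLT.zero hL _
  | succ D ih =>
    -- the indicator factor has degree `< c` by `hc`, the other one `< D * (c + 1)` by induction
    rw [show (D + 1) * (c + 1) = c + D * (c + 1) + 1 by ring]
    intro g
    rw [addDeriv_comp_eq_sum]
    refine Finset.sum_induction _ (IsPolyLT T L _) (fun _ _ => IsPolyLT.add)
      (IsPolyLT.zero hL _) fun α _ => ?_
    exact (hc _ _ (hQ g)).mul hT hL (ih (hf α))

theorem IsPolyLT.comp (hT : ∀ g h, Function.Commute (T g) (T h))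
    (hL : ∀ g, Tendsto (T g) L L) {D₀ : ℕ}
    (hD₀ : ∀ f : A → B, IsPolyLT (fun α y => y + α) ⊤ D₀ f) (f : A → B) {d : ℕ} {Q : X → A}
    (hQ : IsPolyLT T L d Q) : IsPolyLT T L (compDegBound D₀ d) (f ∘ Q) := by
  induction d generalizing f Q with
  | zero =>
    intro g
    filter_upwards [(hL g).eventually hQ, hQ] with x h₁ h₂
    simp_all [addDeriv]
  | succ d ih => exact comp_of_forall_comp hT hL (fun f _ hQ => ih f hQ) (hD₀ f) hQ

end Comp

theorem digitMap_castHom {p : ℕ} [NeZero p] (l : ℕ) {j k m : ℕ} (hjk : j < k) (hkm : k ≤ m)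
    (x : ZMod (p ^ m)) :
    digitMap p l j (ZMod.castHom (pow_dvd_pow p hkm) (ZMod (p ^ k)) x) = digitMap p l j x := by
  rw [digitMap, digitMap, ZMod.castHom_apply, ← ZMod.natCast_val, ZMod.val_natCast,
    ← Nat.sub_add_cancel hjk.le, pow_add, mul_comm, Nat.mod_mul_right_div_self,
    Nat.mod_mod_of_dvd _ (dvd_pow_self p (Nat.sub_pos_of_lt hjk).ne')]

theorem digit_of_polynomial_is_polynomial_general
    (p l d j : ℕ) (hp : p.Prime) :
    ∃ C : ℕ, ∀ (m : ℕ), 1 ≤ m → j ≤ m - 1 →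
      ∀ (X : Type) (_ : MeasurableSpace X) (μ : Measure X)
        (Γ : Type) (_ : AddCommGroup Γ) (T : Γ → X → X),
        (∀ g : Γ, MeasurePreserving (T g) μ μ) →
        (T 0 = id) → (∀ g h : Γ, T (g + h) = T g ∘ T h) →
        ∀ P : X → ZMod (p ^ m),
          (∀ a : Fin d → Γ, ∀ᵐ x ∂μ, (((List.ofFn a).map T).foldr addDeriv P) x = 0) →
          (∀ a : Fin C → Γ, ∀ᵐ x ∂μ,
            (((List.ofFn a).map T).foldr addDeriv (fun x => digitMap p l j (P x))) x
              = 0) := by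
  have : Fact p.Prime := ⟨hp⟩
  have : NeZero p := ⟨hp.ne_zero⟩
  refine ⟨compDegBound (p ^ (j + 1) * l) d, fun m hm hj X _ μ Γ _ T hTμ _ hTadd P hP => ?_⟩
  have hL : ∀ g, Tendsto (T g) (ae μ) (ae μ) := fun g => (hTμ g).quasiMeasurePreserving.tendsto_ae
  have hT : ∀ g h, Function.Commute (T g) (T h) := fun g h x => by
    rw [← Function.comp_apply (f := T g), ← hTadd, add_comm, hTadd, Function.comp_apply]
  have hjm : j + 1 ≤ m := by omega
  let reduce := ZMod.castHom (pow_dvd_pow p hjm) (ZMod (p ^ (j + 1)))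
  have hQ : IsPolyLT T (ae μ) d (reduce ∘ P) :=
    (isPolyLT_iff_forall_foldr.mpr hP).map reduce.toAddMonoidHom
  have hdigit := hQ.comp hT hL isPolyLT_translate_zmod_prime_pow (digitMap p l j)
  simp only [Function.comp_def, reduce, digitMap_castHom l j.lt_succ_self hjm] at hdigit
  exact isPolyLT_iff_forall_foldr.mp hdigit

/-- If `P : X → ℤ/p^mℤ` is an additive polynomial of degree `< d` with respect to a
measure-preserving action of an abelian group, then each digit map `b_j ∘ P` (valued in
`ℤ/p^lℤ`) is a polynomial of degree `< C`, where `C` depends only on `l, d, p, j`. -/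
theorem digit_of_polynomial_is_polynomial
    (p l d j : ℕ) (hp : p.Prime) (hl : 1 ≤ l) :
    ∃ C : ℕ, ∀ (m : ℕ), 1 ≤ m → j ≤ m - 1 →
      ∀ (X : Type) (_ : MeasurableSpace X) (μ : Measure X)
        (Γ : Type) (_ : AddCommGroup Γ) (T : Γ → X → X),
        (∀ g : Γ, MeasurePreserving (T g) μ μ) →
        (T 0 = id) → (∀ g h : Γ, T (g + h) = T g ∘ T h) →
        ∀ P : X → ZMod (p ^ m),
          (∀ a : Fin d → Γ, ∀ᵐ x ∂μ, (((List.ofFn a).map T).foldr addDeriv P) x = 0) →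
          (∀ a : Fin C → Γ, ∀ᵐ x ∂μ,
            (((List.ofFn a).map T).foldr addDeriv (fun x => digitMap p l j (P x))) x
              = 0) :=
  digit_of_polynomial_is_polynomial_general p l d j hp
end

section
/- Let X be an ergodic G-system for a countable abelian group G, let U be a compact abelian group acting freely on X by measure-preserving automorphisms commuting with the G-action, and let P: X → S¹ be a phase polynomial of degree < d (d ≥ 1) with respect to the G-action. Then for every u ∈ U, the function Δ_u P(x) = P(ux)·conj(P(x)) is a phase polynomial of degree < d − 1. -/
/-!
Write `d = e + 1` and `Q = Δ_{h₁} ⋯ Δ_{h_e} P`. As `P` has degree `< e + 1`, `Δ_g Q = 1` a.e. for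
every `g`, so `Q` is `G`-invariant and hence a.e. constant by ergodicity; an a.e. constant function
is a.e. invariant under the measure-preserving map `S u`, i.e. `Δ_u Q = 1` a.e. Since `S u`
commutes with the `G`-action, `Δ_u` commutes with every `Δ_{h_i}`, so
`Δ_{h₁} ⋯ Δ_{h_e} Δ_u P = Δ_u Q`.
-/

open MeasureTheory

section MulDeriv

variable {X M : Type*}

lemma mulDeriv_apply_eq_one_iff [Group M] {S : X → X} {φ : X → M} {x : X} :
    mulDeriv S φ x = 1 ↔ φ (S x) = φ x :=
  mul_inv_eq_one

lemma mulDeriv_mulDeriv_comm [CommGroup M] {S R : X → X} (hSR : S ∘ R = R ∘ S) (φ : X → M) :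
    mulDeriv R (mulDeriv S φ) = mulDeriv S (mulDeriv R φ) := by
  funext x
  have hx : S (R x) = R (S x) := congrFun hSR x
  simp only [mulDeriv, hx, mul_inv, inv_inv, mul_comm, mul_left_comm, mul_assoc]

lemma foldr_mulDeriv_mulDeriv_comm [CommGroup M] {S : X → X} {L : List (X → X)}
    (hL : ∀ R ∈ L, S ∘ R = R ∘ S) (φ : X → M) :
    L.foldr mulDeriv (mulDeriv S φ) = mulDeriv S (L.foldr mulDeriv φ) := by
  induction L with
  | nil => rfl
  | cons R L ih =>
    rw [List.foldr_cons, List.foldr_cons, ih fun R' hR' => hL R' (List.mem_cons_of_mem _ hR'),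
      mulDeriv_mulDeriv_comm (hL R List.mem_cons_self)]

lemma foldr_mulDeriv_ofFn_cons [Group M] {G : Type*} (T : G → X → X) {n : ℕ} (g : G)
    (h : Fin n → G) (φ : X → M) :
    ((List.ofFn (Fin.cons g h : Fin (n + 1) → G)).map T).foldr mulDeriv φ =
      mulDeriv (T g) (((List.ofFn h).map T).foldr mulDeriv φ) := by
  simp only [List.ofFn_succ, Fin.cons_zero, Fin.cons_succ, List.map_cons, List.foldr_cons]

variable [MeasurableSpace X] [Group M] [MeasurableSpace M] [MeasurableMul₂ M] [MeasurableInv M]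

lemma measurable_mulDeriv {S : X → X} {φ : X → M} (hS : Measurable S) (hφ : Measurable φ) :
    Measurable (mulDeriv S φ) :=
  (hφ.comp hS).mul hφ.inv

lemma measurable_foldr_mulDeriv {L : List (X → X)} (hL : ∀ R ∈ L, Measurable R) {φ : X → M}
    (hφ : Measurable φ) : Measurable (L.foldr mulDeriv φ) := by
  induction L with
  | nil => exact hφ
  | cons R L ih =>
    exact measurable_mulDeriv (hL R List.mem_cons_self)
      (ih fun R' hR' => hL R' (List.mem_cons_of_mem _ hR'))

end MulDeriv

lemma ae_comp_eq_of_ae_eq_const {X α : Type*} [MeasurableSpace X] {μ : Measure X} {S : X → X}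
    (hS : Measure.QuasiMeasurePreserving S μ μ) {f : X → α} {c : α} (hc : ∀ᵐ x ∂μ, f x = c) :
    ∀ᵐ x ∂μ, f (S x) = f x := by
  filter_upwards [hS.ae hc, hc] with x hSx hx
  rw [hSx, hx]

theorem vertical_deriv_phasePoly_general
    [MeasurableSpace Circle] [BorelSpace Circle]
    {G X U : Type*} [MeasurableSpace X]
    (μ : Measure X)
    (T : G → X → X) (hmp : ∀ g : G, MeasurePreserving (T g) μ μ)
    (herg : ∀ f : X → ℂ, Measurable f → (∀ g : G, ∀ᵐ x ∂μ, f (T g x) = f x) →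
      ∃ c : ℂ, ∀ᵐ x ∂μ, f x = c)
    (S : U → X → X) (hSmp : ∀ u : U, MeasurePreserving (S u) μ μ)
    (hcomm : ∀ (u : U) (g : G), S u ∘ T g = T g ∘ S u)
    (d : ℕ) (hd : 1 ≤ d)
    (P : X → Circle) (hPmeas : Measurable P)
    (hpoly : ∀ h : Fin d → G, ∀ᵐ x ∂μ, (((List.ofFn h).map T).foldr mulDeriv P) x = 1) :
    ∀ u : U, ∀ h : Fin (d - 1) → G,
      ∀ᵐ x ∂μ, (((List.ofFn h).map T).foldr mulDeriv (mulDeriv (S u) P)) x = 1 := by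
  obtain ⟨e, rfl⟩ := Nat.exists_eq_add_of_le' hd
  intro u h
  set Q := ((List.ofFn h).map T).foldr mulDeriv P
  have hQ_meas : Measurable Q :=
    measurable_foldr_mulDeriv (by simp [(hmp _).measurable]) hPmeas
  have hQ_inv (g : G) : ∀ᵐ x ∂μ, (Q (T g x) : ℂ) = Q x := by
    filter_upwards [hpoly (Fin.cons g h)] with x hx
    rw [foldr_mulDeriv_ofFn_cons, mulDeriv_apply_eq_one_iff] at hx
    exact congrArg (fun z : Circle => (z : ℂ)) hx
  obtain ⟨c, hc⟩ := herg (fun x => (Q x : ℂ)) (by fun_prop) hQ_inv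
  have hQ_vert : ∀ᵐ x ∂μ, Q (S u x) = Q x :=
    (ae_comp_eq_of_ae_eq_const (hSmp u).quasiMeasurePreserving hc).mono
      fun x hx => Subtype.coe_injective hx
  rw [foldr_mulDeriv_mulDeriv_comm (by simpa using fun _ => hcomm u _)]
  filter_upwards [hQ_vert] with x hx using mulDeriv_apply_eq_one_iff.2 hx

/-- Let `X` be an ergodic `G`-system for a countable abelian group `G`, and let `U` be a
compact abelian group acting freely on `X` by measure-preserving automorphisms
commuting with the `G`-action.  If `P : X → S¹` is a phase polynomial of degree `< d`
(`d ≥ 1`) with respect to the `G`-action, then for every `u ∈ U` the vertical derivative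
`Δ_u P` is a phase polynomial of degree `< d − 1`. -/
theorem vertical_deriv_phasePoly
    [MeasurableSpace Circle] [BorelSpace Circle]
    {G X U : Type*} [AddCommGroup G] [Countable G] [MeasurableSpace X]
    (μ : Measure X) [IsProbabilityMeasure μ]
    [CommGroup U] [TopologicalSpace U] [IsTopologicalGroup U] [CompactSpace U]
    (T : G → X → X) (hmp : ∀ g : G, MeasurePreserving (T g) μ μ)
    (hT0 : T 0 = id) (hTadd : ∀ g h : G, T (g + h) = T g ∘ T h)
    (herg : ∀ f : X → ℂ, Measurable f → (∀ g : G, ∀ᵐ x ∂μ, f (T g x) = f x) →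
      ∃ c : ℂ, ∀ᵐ x ∂μ, f x = c)
    (S : U → X → X) (hSmp : ∀ u : U, MeasurePreserving (S u) μ μ)
    (hS1 : S 1 = id) (hSmul : ∀ u v : U, S (u * v) = S u ∘ S v)
    (hcomm : ∀ (u : U) (g : G), S u ∘ T g = T g ∘ S u)
    (hfree : ∀ (u : U) (x : X), S u x = x → u = 1)
    (d : ℕ) (hd : 1 ≤ d)
    (P : X → Circle) (hPmeas : Measurable P)
    (hpoly : ∀ h : Fin d → G, ∀ᵐ x ∂μ, (((List.ofFn h).map T).foldr mulDeriv P) x = 1) :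
    ∀ u : U, ∀ h : Fin (d - 1) → G,
      ∀ᵐ x ∂μ, (((List.ofFn h).map T).foldr mulDeriv (mulDeriv (S u) P)) x = 1 :=
  vertical_deriv_phasePoly_general μ T hmp herg S hSmp hcomm d hd P hPmeas hpoly
end

section
/- Let G = ⊕_{p∈P}𝔽_p act ergodically on a probability space X, and let q: G × X → S¹ be a phase polynomial of degree < d in the X-variable that is also a cocycle, i.e., q(g+g′,x) = q(g,x)·q(g′,T_g x) for all g,g′ ∈ G and a.e. x. Then for every g ∈ G of order n, the function q(g,·) takes values in C_{n^d}, the group of n^d-th roots of unity. -/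
open MeasureTheory

/-!
Write `Δ_g φ = φ ∘ T_g / φ`. Iterating the cocycle identity and using `n • g = 0` gives
`∏_{j < n} q(g, T_{j g} x) = 1`. For any `φ` with `∏_{j < n} φ ∘ T_{j g} = 1`,
the function `∏_{j < n} Δ_{j g} φ` equals `φ ^ (-n)`; it has degree one less than `φ`, and
`φ ^ n` again satisfies the product relation, so induction on the degree gives `φ ^ (n ^ d) = 1`.
-/

section MulDeriv

variable {X U : Type*} [CommGroup U]

noncomputable def mulDerivHom (S : X → X) : Monoid.End (X → U) where
  toFun := mulDeriv S
  map_one' := funext fun _ => by simp [mulDeriv]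
  map_mul' φ ψ := funext fun _ => by simp only [mulDeriv, Pi.mul_apply, mul_inv, mul_mul_mul_comm]

lemma list_prod_map_mulDerivHom_apply (L : List (X → X)) (φ : X → U) :
    (L.map mulDerivHom).prod φ = L.foldr mulDeriv φ := by
  induction L with
  | nil => rfl
  | cons S L ih =>
    rw [List.map_cons, List.prod_cons, Monoid.End.coe_mul, Function.comp_apply, ih]
    rfl

lemma foldr_mulDeriv_ae_congr [MeasurableSpace X] {μ : Measure X} {L : List (X → X)}
    (hL : ∀ S ∈ L, Measure.QuasiMeasurePreserving S μ μ) {φ ψ : X → U} (h : φ =ᵐ[μ] ψ) :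
    L.foldr mulDeriv φ =ᵐ[μ] L.foldr mulDeriv ψ := by
  induction L with
  | nil => exact h
  | cons S L ih =>
    have ih := ih fun S' hS' => hL S' (List.mem_cons_of_mem _ hS')
    filter_upwards [ih, (hL S List.mem_cons_self).ae_eq_comp ih] with x hx hSx
    simp only [List.foldr, mulDeriv]
    rw [hx, show L.foldr mulDeriv φ (S x) = L.foldr mulDeriv ψ (S x) from hSx]

end MulDeriv

section PhasePolynomials

variable {X G U : Type*} [MeasurableSpace X] [CommGroup U]

/-- `d` is a strict bound: the members have degree `< d`. -/
def phasePolynomials (μ : Measure X) (T : G → X → X) (d : ℕ) : Subgroup (X → U) where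
  carrier := {φ | ∀ h : Fin d → G, ∀ᵐ x ∂μ, ((List.ofFn h).map T).foldr mulDeriv φ x = 1}
  one_mem' h := by
    filter_upwards with x
    rw [← list_prod_map_mulDerivHom_apply, map_one]
    rfl
  mul_mem' {φ ψ} hφ hψ h := by
    filter_upwards [hφ h, hψ h] with x hφx hψx
    rw [← list_prod_map_mulDerivHom_apply, map_mul, Pi.mul_apply,
      list_prod_map_mulDerivHom_apply, list_prod_map_mulDerivHom_apply, hφx, hψx, mul_one]
  inv_mem' {φ} hφ h := by
    filter_upwards [hφ h] with x hφx
    rw [← list_prod_map_mulDerivHom_apply, map_inv, Pi.inv_apply,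
      list_prod_map_mulDerivHom_apply, hφx, inv_one]

variable {μ : Measure X} {T : G → X → X} {d : ℕ}

lemma ae_eq_one_of_mem_phasePolynomials_zero {φ : X → U} (hφ : φ ∈ phasePolynomials μ T 0) :
    φ =ᵐ[μ] 1 :=
  hφ Fin.elim0

lemma mem_phasePolynomials_of_ae_eq (hT : ∀ g, Measure.QuasiMeasurePreserving (T g) μ μ)
    {φ ψ : X → U} (h : φ =ᵐ[μ] ψ) (hφ : φ ∈ phasePolynomials μ T d) :
    ψ ∈ phasePolynomials μ T d := by
  intro hs
  have hL : ∀ S ∈ (List.ofFn hs).map T, Measure.QuasiMeasurePreserving S μ μ := by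
    simp only [List.mem_map]
    rintro _ ⟨g, -, rfl⟩
    exact hT g
  filter_upwards [hφ hs, foldr_mulDeriv_ae_congr hL h] with x hφx hx
  rw [← hx, hφx]

lemma mulDeriv_mem_phasePolynomials {φ : X → U} (hφ : φ ∈ phasePolynomials μ T (d + 1)) (g : G) :
    mulDeriv (T g) φ ∈ phasePolynomials μ T d := by
  intro h
  have hsnoc : List.ofFn (Fin.snoc h g : Fin (d + 1) → G) = List.ofFn h ++ [g] := by
    rw [List.ofFn_succ']
    simp [Fin.snoc_castSucc, Fin.snoc_last, List.concat_eq_append]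
  have key := hφ (Fin.snoc h g)
  rw [hsnoc, List.map_append, List.foldr_append] at key
  exact key

theorem ae_pow_card_pow_eq_one_of_ae_prod_eq_one
    (hT : ∀ g, Measure.QuasiMeasurePreserving (T g) μ μ) {ι : Type*} (s : Finset ι) (a : ι → G)
    {φ : X → U} (hφ : φ ∈ phasePolynomials μ T d)
    (hprod : ∀ᵐ x ∂μ, ∏ j ∈ s, φ (T (a j) x) = 1) :
    ∀ᵐ x ∂μ, φ x ^ s.card ^ d = 1 := by
  induction d generalizing φ with
  | zero =>
    filter_upwards [ae_eq_one_of_mem_phasePolynomials_zero hφ] with x hx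
    simpa using hx
  | succ d ih =>
    have hΨ : ∏ j ∈ s, mulDeriv (T (a j)) φ ∈ phasePolynomials μ T d :=
      Subgroup.prod_mem _ fun j _ => mulDeriv_mem_phasePolynomials hφ (a j)
    have hΨ_eq : (∏ j ∈ s, mulDeriv (T (a j)) φ)⁻¹ =ᵐ[μ] fun x => φ x ^ s.card := by
      filter_upwards [hprod] with x hx
      simp only [Pi.inv_apply, Finset.prod_apply, mulDeriv, Finset.prod_mul_distrib, hx,
        Finset.prod_const, one_mul, inv_pow, inv_inv]
    have hφn := mem_phasePolynomials_of_ae_eq hT hΨ_eq (inv_mem hΨ)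
    have hprodn : ∀ᵐ x ∂μ, ∏ j ∈ s, φ (T (a j) x) ^ s.card = 1 := by
      filter_upwards [hprod] with x hx
      rw [Finset.prod_pow, hx, one_pow]
    filter_upwards [ih hφn hprodn] with x hx
    rwa [pow_succ', pow_mul]

end PhasePolynomials

section Cocycle

variable {X G U : Type*} [MeasurableSpace X] [AddMonoid G] [CommGroup U]
  {μ : Measure X} {T : G → X → X} {q : G → X → U}

lemma ae_cocycle_zero_eq_one (hT0 : T 0 = id)
    (hq : ∀ g g', ∀ᵐ x ∂μ, q (g + g') x = q g x * q g' (T g x)) :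
    ∀ᵐ x ∂μ, q 0 x = 1 := by
  filter_upwards [hq 0 0] with x hx
  rw [add_zero, hT0] at hx
  exact left_eq_mul.mp hx

lemma ae_cocycle_nsmul_eq_prod (hT : ∀ g, Measure.QuasiMeasurePreserving (T g) μ μ)
    (hT0 : T 0 = id) (hTadd : ∀ g h, T (g + h) = T g ∘ T h)
    (hq : ∀ g g', ∀ᵐ x ∂μ, q (g + g') x = q g x * q g' (T g x)) (g : G) (m : ℕ) :
    ∀ᵐ x ∂μ, q (m • g) x = ∏ j ∈ Finset.range m, q g (T (j • g) x) := by
  induction m with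
  | zero => simpa using ae_cocycle_zero_eq_one hT0 hq
  | succ m ih =>
    filter_upwards [hq g (m • g), (hT g).ae ih] with x hx hTx
    have hshift (j : ℕ) : T (j • g) (T g x) = T ((j + 1) • g) x := by
      rw [succ_nsmul, hTadd]; rfl
    rw [succ_nsmul', hx, hTx, Finset.prod_range_succ']
    simp only [hshift, zero_nsmul, hT0, id_eq, mul_comm]

end Cocycle

theorem phasePoly_cocycle_values_general
    (P : Set ℕ)
    {X : Type*} [MeasurableSpace X] (μ : Measure X)
    (T : (Π₀ p : P, ZMod p) → X → X)
    (hmp : ∀ g, MeasurePreserving (T g) μ μ)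
    (hT0 : T 0 = id) (hTadd : ∀ g h, T (g + h) = T g ∘ T h)
    (d : ℕ) (q : (Π₀ p : P, ZMod p) → X → Circle)
    (hqpoly : ∀ (g : Π₀ p : P, ZMod p) (h : Fin d → (Π₀ p : P, ZMod p)),
      ∀ᵐ x ∂μ, (((List.ofFn h).map T).foldr mulDeriv (q g)) x = 1)
    (hcocycle : ∀ g g' : Π₀ p : P, ZMod p,
      ∀ᵐ x ∂μ, q (g + g') x = q g x * q g' (T g x)) :
    ∀ (g : Π₀ p : P, ZMod p) (n : ℕ), addOrderOf g = n →
      ∀ᵐ x ∂μ, (q g x) ^ (n ^ d) = 1 := by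
  rintro g n rfl
  have hT g := (hmp g).quasiMeasurePreserving
  have hprod : ∀ᵐ x ∂μ, ∏ j ∈ Finset.range (addOrderOf g), q g (T (j • g) x) = 1 := by
    filter_upwards [ae_cocycle_nsmul_eq_prod hT hT0 hTadd hcocycle g (addOrderOf g),
      ae_cocycle_zero_eq_one hT0 hcocycle] with x hx hq0
    rwa [← hx, addOrderOf_nsmul_eq_zero]
  simpa using ae_pow_card_pow_eq_one_of_ae_prod_eq_one hT _ _ (hqpoly g) hprod

/-- Let `G = ⊕_{p ∈ P} 𝔽_p` act ergodically on a probability space `X`, and let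
`q : G × X → S¹` be a cocycle which is a phase polynomial of degree `< d` in the
`X`-variable.  Then for every `g ∈ G` of order `n`, the function `q(g,·)` takes values
in `C_{n^d}`, the `n^d`-th roots of unity. -/
theorem phasePoly_cocycle_values
    [MeasurableSpace Circle] [BorelSpace Circle]
    (P : Set ℕ) (hP : ∀ p ∈ P, Nat.Prime p)
    {X : Type*} [MeasurableSpace X] (μ : Measure X) [IsProbabilityMeasure μ]
    (T : (Π₀ p : P, ZMod p) → X → X)
    (hmp : ∀ g, MeasurePreserving (T g) μ μ)
    (hT0 : T 0 = id) (hTadd : ∀ g h, T (g + h) = T g ∘ T h)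
    (herg : ∀ f : X → ℂ, Measurable f →
      (∀ g : Π₀ p : P, ZMod p, ∀ᵐ x ∂μ, f (T g x) = f x) → ∃ c : ℂ, ∀ᵐ x ∂μ, f x = c)
    (d : ℕ) (q : (Π₀ p : P, ZMod p) → X → Circle)
    (hqmeas : ∀ g, Measurable (q g))
    (hqpoly : ∀ (g : Π₀ p : P, ZMod p) (h : Fin d → (Π₀ p : P, ZMod p)),
      ∀ᵐ x ∂μ, (((List.ofFn h).map T).foldr mulDeriv (q g)) x = 1)
    (hcocycle : ∀ g g' : Π₀ p : P, ZMod p,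
      ∀ᵐ x ∂μ, q (g + g') x = q g x * q g' (T g x)) :
    ∀ (g : Π₀ p : P, ZMod p) (n : ℕ), addOrderOf g = n →
      ∀ᵐ x ∂μ, (q g x) ^ (n ^ d) = 1 :=
  phasePoly_cocycle_values_general P μ T hmp hT0 hTadd d q hqpoly hcocycle
end

section
/- Let T: X → X be an ergodic measure-preserving transformation of a probability space with Tⁿ = id for some n = p₁⋯p_j a product of distinct primes, each p_i > k. Let F: X → S¹ be a phase polynomial of degree < k with respect to the group generated by T, taking values in the cyclic group C_n of n-th roots of unity. Then ∏_{t=0}^{n−1} F(Tᵗ x) = 1 for a.e. x. -/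
open MeasureTheory

lemma mulDeriv_foldr_replicate {X U : Type*} [Group U] (T : X → X) (F : X → U) :
    ∀ k, (List.replicate k T).foldr mulDeriv F = (mulDeriv T)^[k] F := by
  intro k
  induction k with
  | zero => rfl
  | succ k ih => rw [List.replicate_succ, List.foldr_cons, ih, Function.iterate_succ_apply']

lemma sum_range_choose_eq (i : ℕ) : ∀ n, ∑ t ∈ Finset.range n, t.choose i = n.choose (i+1) := by
  intro n
  induction n with
  | zero => simp
  | succ n ih => rw [Finset.sum_range_succ, ih, Nat.choose_succ_succ (n) (i), Nat.add_comm]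

lemma taylor_iter {X U : Type*} [CommGroup U] (T : X → X) (F : X → U) (t : ℕ) (x : X) :
    F (T^[t] x) = ∏ i ∈ Finset.range (t+1), ((mulDeriv T)^[i] F) x ^ (t.choose i) := by
  induction t generalizing x with
  | zero => simp
  | succ t ih =>
    have hD : ∀ i y, ((mulDeriv T)^[i] F) (T y)
        = ((mulDeriv T)^[i+1] F) y * ((mulDeriv T)^[i] F) y := by
      intro i y
      rw [Function.iterate_succ_apply']
      show _ = (((mulDeriv T)^[i] F) (T y) * (((mulDeriv T)^[i] F) y)⁻¹) * _
      group
    rw [Function.iterate_succ_apply, ih (T x)]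
    have : ∀ i ∈ Finset.range (t+1), ((mulDeriv T)^[i] F) (T x) ^ (t.choose i)
        = ((mulDeriv T)^[i+1] F) x ^ (t.choose i) * ((mulDeriv T)^[i] F) x ^ (t.choose i) := by
      intro i _; rw [hD, mul_pow]
    rw [Finset.prod_congr rfl this, Finset.prod_mul_distrib]
    rw [Finset.prod_range_succ' (fun i => ((mulDeriv T)^[i] F) x ^ ((t+1).choose i)) (t+1)]
    simp only [Nat.choose_succ_succ, pow_add, Finset.prod_mul_distrib, Nat.choose_zero_right,
      pow_one]
    have hB : (∏ i ∈ Finset.range (t+1), ((mulDeriv T)^[i] F) x ^ t.choose i)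
        = (∏ i ∈ Finset.range (t+1), ((mulDeriv T)^[i+1] F) x ^ t.choose (i+1))
          * ((mulDeriv T)^[0] F) x := by
      rw [Finset.prod_range_succ (fun i => ((mulDeriv T)^[i+1] F) x ^ (t.choose (i+1))) t,
        Nat.choose_eq_zero_of_lt (Nat.lt_succ_self t), pow_zero, mul_one,
        Finset.prod_range_succ' (fun i => ((mulDeriv T)^[i] F) x ^ (t.choose i)) t,
        Nat.choose_zero_right, pow_one]
    rw [hB, ← mul_assoc]

lemma dvd_choose_of_primes {k n : ℕ} (ps : Finset ℕ) (hps : ∀ p ∈ ps, Nat.Prime p ∧ k < p)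
    (hn : n = ∏ p ∈ ps, p) {m : ℕ} (hm1 : 1 ≤ m) (hmk : m ≤ k) : n ∣ n.choose m := by
  subst hn
  refine Finset.prod_primes_dvd _ (fun p hp => (hps p hp).1.prime) (fun p hp => ?_)
  obtain ⟨hprime, hkp⟩ := hps p hp
  have hpn : p ∣ ∏ p ∈ ps, p := Finset.dvd_prod_of_mem _ hp
  generalize hndef : (∏ p ∈ ps, p) = n at hpn ⊢
  have hn1 : 1 ≤ n := Nat.one_le_iff_ne_zero.2 (by
    intro h; rw [← hndef, Finset.prod_eq_zero_iff] at h
    obtain ⟨q, hq, hq0⟩ := h; exact (hps q hq).1.ne_zero hq0)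
  -- n * (n-1).choose (m-1) = n.choose m * m
  have key : n * (n - 1).choose (m - 1) = n.choose m * m := by
    obtain ⟨n', rfl⟩ : ∃ n', n = n' + 1 := ⟨n - 1, by omega⟩
    obtain ⟨m', rfl⟩ : ∃ m', m = m' + 1 := ⟨m - 1, by omega⟩
    simpa using Nat.add_one_mul_choose_eq n' m'
  have hpdvd : p ∣ n.choose m * m := key ▸ hpn.mul_right _
  rcases (Nat.Prime.dvd_mul hprime).1 hpdvd with h | h
  · exact h
  · exact absurd (Nat.le_of_dvd (by omega) h) (by omega)

/-- Let `T` be an ergodic measure-preserving transformation of a probability space with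
`Tⁿ = id`, where `n = p₁ ⋯ p_j` is a product of distinct primes each `> k`.  If
`F : X → S¹` is a phase polynomial of degree `< k` (with respect to the group generated
by `T`) taking values in the `n`-th roots of unity, then `∏_{t=0}^{n−1} F(Tᵗ x) = 1`
for a.e. `x`. -/
theorem line_cocycle_of_phasePoly
    [MeasurableSpace Circle] [BorelSpace Circle]
    {X : Type*} [MeasurableSpace X] (μ : Measure X) [IsProbabilityMeasure μ]
    (T : X → X) (hT : Ergodic T μ)
    (k : ℕ) (ps : Finset ℕ) (hps : ∀ p ∈ ps, Nat.Prime p ∧ k < p)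
    (n : ℕ) (hn : n = ∏ p ∈ ps, p)
    (hTn : T^[n] = id)
    (F : X → Circle) (hFmeas : Measurable F)
    (hval : ∀ x, F x ^ n = 1)
    (hpoly : ∀ a : Fin k → ℕ, ∀ᵐ x ∂μ,
      (((List.ofFn a).map (fun i => T^[i])).foldr mulDeriv F) x = 1) :
    ∀ᵐ x ∂μ, ∏ t ∈ Finset.range n, F (T^[t] x) = 1 := by
  set D : ℕ → X → Circle := fun i => (mulDeriv T)^[i] F with hD
  -- every derivative is n-torsion
  have htor : ∀ i x, D i x ^ n = 1 := by
    intro i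
    induction i with
    | zero => exact hval
    | succ i ih =>
      intro x
      show ((mulDeriv T)^[i+1] F) x ^ n = 1
      rw [Function.iterate_succ_apply']
      show (((mulDeriv T)^[i] F) (T x) * (((mulDeriv T)^[i] F) x)⁻¹) ^ n = 1
      rw [mul_pow, inv_pow]
      have h1 := ih (T x); have h2 := ih x
      simp only [hD] at h1 h2
      rw [show ((mulDeriv T)^[i] F) (T x) ^ n = 1 from h1,
        show ((mulDeriv T)^[i] F) x ^ n = 1 from h2]; simp
  -- D k = 1 a.e.
  have hDk : ∀ᵐ x ∂μ, D k x = 1 := by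
    have := hpoly (fun _ => 1)
    have hfold : (((List.ofFn (fun _ : Fin k => (1:ℕ))).map (fun i => T^[i])).foldr mulDeriv F)
        = D k := by
      rw [List.ofFn_const, List.map_replicate, Function.iterate_one,
        mulDeriv_foldr_replicate]
    rwa [hfold] at this
  -- D i = 1 a.e. for all i ≥ k
  have hDq : ∀ j, ∀ᵐ x ∂μ, D (k + j) x = 1 := by
    intro j
    induction j with
    | zero => simpa using hDk
    | succ j ih =>
      have hcomp : ∀ᵐ x ∂μ, D (k + j) (T x) = 1 :=
        hT.toMeasurePreserving.quasiMeasurePreserving.ae ih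
      filter_upwards [ih, hcomp] with x h1 h2
      show ((mulDeriv T)^[k + j + 1] F) x = 1
      rw [Function.iterate_succ_apply']
      show ((mulDeriv T)^[k + j] F) (T x) * (((mulDeriv T)^[k + j] F) x)⁻¹ = 1
      simp only [hD] at h1 h2
      rw [show ((mulDeriv T)^[k+j] F) (T x) = 1 from h2,
        show ((mulDeriv T)^[k+j] F) x = 1 from h1]; simp
  have hall : ∀ᵐ x ∂μ, ∀ i, k ≤ i → i < n → D i x = 1 := by
    rw [MeasureTheory.ae_all_iff]
    intro i
    by_cases hki : k ≤ i
    · filter_upwards [hDq (i - k)] with x hx _ _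
      rwa [Nat.add_sub_cancel' hki] at hx
    · filter_upwards with x h; omega
  filter_upwards [hall] with x hx
  have step1 : ∀ t ∈ Finset.range n, F (T^[t] x)
      = ∏ i ∈ Finset.range n, D i x ^ (t.choose i) := by
    intro t ht
    rw [taylor_iter T F t x]
    refine Finset.prod_subset (Finset.range_subset_range.2 (Finset.mem_range.1 ht)) ?_
    intro i _ hi
    rw [Nat.choose_eq_zero_of_lt (by simpa using hi), pow_zero]
  rw [Finset.prod_congr rfl step1, Finset.prod_comm]
  refine Finset.prod_eq_one (fun i hi => ?_)
  rw [Finset.prod_pow_eq_pow_sum, sum_range_choose_eq]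
  by_cases hik : i < k
  · obtain ⟨c, hc⟩ := dvd_choose_of_primes ps hps hn (m := i + 1) (by omega) (by omega)
    rw [hc, pow_mul, htor, one_pow]
  · rw [hx i (by omega) (Finset.mem_range.1 hi), one_pow]
end
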